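/- arXiv:1106.0722 — 5 statements merged into one kernel-verified Lean document; each statement's English description precedes it below -/
import Mathlib

section
/- There exist constants c > 0 and C < ∞, depending only on d, such that for every ball ℬ = ℬ(z̄, e, r, r*): (i) the set {(x, y') ∈ ℝ^d × ℝ^{d−1} : (x, (y', x_d − |y' − x'|²)) ∈ ℬ} has Lebesgue measure at least c ρ^d; (ii) |π(ℬ)| ≤ C ρ ∏_{j=1}^{d−1} r_j; and (iii) |π*(ℬ)| ≤ C ρ ∏_{j=1}^{d−1} r*_j. -/
open MeasureTheory ENNReal
open scoped RealInnerProductSpace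

noncomputable section

/-- `ℝ^{d-1}` -/
abbrev Vec (n : ℕ) : Type := EuclideanSpace ℝ (Fin n)

/-- `ℝ^d = ℝ^{d-1} × ℝ`, a point `x = (x', x_d)` -/
abbrev Pt (n : ℕ) : Type := Vec n × ℝ

/-- The Radon-like transform `Tf(x) = ∫_{ℝ^{d-1}} f(x' - t, x_d - |t|²) dt`. -/
def radonT (n : ℕ) (f : Pt n → ℝ≥0∞) (x : Pt n) : ℝ≥0∞ :=
  ∫⁻ t : Vec n, f (x.1 - t, x.2 - ‖t‖ ^ 2)

/-- The incidence functional `𝒯(E, E*) = ∫_E T(χ_{E*})`. -/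
def incT (n : ℕ) (E Estar : Set (Pt n)) : ℝ≥0∞ :=
  ∫⁻ x in E, radonT n (Estar.indicator 1) x

/-- Admissibility of the parameters of a ball `ℬ(z̄, e, r, r*)`:
the center `z̄ = (x̄, x̄*)` lies on the incidence manifold `ℐ`, `ρ > 0`,
`e` is an orthonormal basis of `ℝ^{d-1}`, and `r_j r*_j = ρ > 0` for all `j`. -/
def IsBallParams (n : ℕ) (zb : Pt n × Pt n) (e : Fin n → Vec n)
    (r rs : Fin n → ℝ) (ρ : ℝ) : Prop :=
  zb.2.2 = zb.1.2 - ‖zb.2.1 - zb.1.1‖ ^ 2 ∧ 0 < ρ ∧ Orthonormal ℝ e ∧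
    (∀ j, 0 < r j) ∧ (∀ j, 0 < rs j) ∧ (∀ j, r j * rs j = ρ)

/-- The ball `ℬ(z̄, e, r, r*)`, a subset of the incidence manifold
`ℐ = {(x,y) : y_d = x_d - |y' - x'|²} ⊆ ℝ^d × ℝ^d`. -/
def ballI (n : ℕ) (zb : Pt n × Pt n) (e : Fin n → Vec n)
    (r rs : Fin n → ℝ) (ρ : ℝ) : Set (Pt n × Pt n) :=
  fun z => z.2.2 = z.1.2 - ‖z.2.1 - z.1.1‖ ^ 2 ∧
    (∀ j, |⟪z.1.1 - zb.1.1, e j⟫| < r j) ∧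
    |z.1.2 - zb.2.2 - ‖z.1.1 - zb.2.1‖ ^ 2| < ρ ∧
    (∀ j, |⟪z.2.1 - zb.2.1, e j⟫| < rs j) ∧
    |z.2.2 - zb.1.2 + ‖z.2.1 - zb.1.1‖ ^ 2| < ρ

/-! After an orthonormal change of coordinates adapted to `e`, the projection `π(ℬ)` lies in
the set of `x` whose `x'` is in a box of half-sides `r_j` around `x̄'` and whose `x_d` is within `ρ`
of the paraboloid `x̄*_d + |x' - x̄*'|²`; by Fubini this set has measure `2^d ρ ∏ r_j`, and `π*(ℬ)`
is handled symmetrically.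

For the lower bound shrink both boxes by `ε = 1/(2d)` and keep `x_d` within `ρ/2` of the same
paraboloid. Since `x̄*` lies on `ℐ`, the identity
`|y' - x̄'|² - |y' - x'|² = |x̄*' - x̄'|² - |x' - x̄*'|² + 2⟨y' - x̄*', x' - x̄'⟩`
shows that the quantity in the last defining condition of `ℬ` differs from the one in the slab
condition by `2⟨y' - x̄*', x' - x̄'⟩`, whose absolute value is at most
`2 ∑ ε² r_j r*_j = 2(d-1)ε²ρ ≤ ρ/2`.
So the product of these sets lies in the parametrized ball; its measure is `ρ^d / d^(2(d-1))`.
-/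

section GraphSlab

variable {V : Type*} [MeasureSpace V]

def graphSlab (U : Set V) (g : V → ℝ) (δ : ℝ) : Set (V × ℝ) :=
  {p | p.1 ∈ U ∧ |p.2 - g p.1| < δ}

lemma volume_graphSlab {U : Set V} (hU : MeasurableSet U) {g : V → ℝ} (hg : Measurable g)
    (δ : ℝ) : volume (graphSlab U g δ) = volume U * ENNReal.ofReal (2 * δ) := by
  have hslice (v : V) : volume (Prod.mk v ⁻¹' graphSlab U g δ) =
      U.indicator (fun _ => ENNReal.ofReal (2 * δ)) v := by
    by_cases hv : v ∈ U
    · have : Prod.mk v ⁻¹' graphSlab U g δ = Set.Ioo (g v - δ) (g v + δ) := by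
        ext t
        simp only [graphSlab, Set.mem_preimage, Set.mem_ofPred_eq, hv, true_and, abs_lt,
          Set.mem_Ioo]
        constructor <;> rintro ⟨h₁, h₂⟩ <;> constructor <;> linarith
      rw [this, Real.volume_Ioo, Set.indicator_of_mem hv]
      ring_nf
    · simp [graphSlab, hv]
  have hmeas : MeasurableSet (graphSlab U g δ) :=
    (hU.preimage measurable_fst).inter
      (measurableSet_lt (measurable_snd.sub (hg.comp measurable_fst)).abs measurable_const)
  rw [Measure.volume_eq_prod, Measure.prod_apply hmeas]
  simp_rw [hslice]
  rw [lintegral_indicator_const hU, mul_comm]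

end GraphSlab

section CoordBox

variable {ι F : Type*} [Fintype ι] [NormedAddCommGroup F] [InnerProductSpace ℝ F]

def coordBox (b : ι → F) (a : F) (s : ι → ℝ) : Set F :=
  {x | ∀ j, |⟪x - a, b j⟫| < s j}

lemma measurableSet_coordBox [MeasurableSpace F] [BorelSpace F] (b : ι → F) (a : F)
    (s : ι → ℝ) : MeasurableSet (coordBox b a s) := by
  simp only [coordBox, Set.ofPred_forall]
  exact MeasurableSet.iInter fun j => measurableSet_lt (by fun_prop) measurable_const

lemma OrthonormalBasis.volume_coordBox [FiniteDimensional ℝ F] [MeasurableSpace F]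
    [BorelSpace F] (b : OrthonormalBasis ι ℝ F) (a : F) {s : ι → ℝ} (hs : ∀ j, 0 ≤ s j) :
    volume (coordBox b a s) = ENNReal.ofReal (2 ^ Fintype.card ι * ∏ j, s j) := by
  have hcoord : MeasurePreserving (fun x : F => (b.repr (x - a)).ofLp) :=
    (PiLp.volume_preserving_ofLp ι).comp
      (b.measurePreserving_repr.comp (measurePreserving_sub_right volume a))
  have hbox : coordBox b a s =
      (fun x => (b.repr (x - a)).ofLp) ⁻¹' Set.univ.pi fun j => Set.Ioo (-s j) (s j) := by
    ext x
    simp only [coordBox, Set.mem_ofPred_eq, Set.mem_preimage, Set.mem_univ_pi, Set.mem_Ioo,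
      abs_lt, b.repr_apply_apply, real_inner_comm]
  rw [hbox, hcoord.measure_preimage
    (MeasurableSet.univ_pi fun _ => measurableSet_Ioo).nullMeasurableSet, Real.volume_pi_Ioo,
    ← ENNReal.ofReal_prod_of_nonneg fun j _ => by linarith [hs j]]
  simp [← two_mul, Finset.prod_mul_distrib]

lemma OrthonormalBasis.abs_inner_le_sum (b : OrthonormalBasis ι ℝ F) {u v : F} {s t : ι → ℝ}
    (hu : ∀ j, |⟪u, b j⟫| ≤ s j) (hv : ∀ j, |⟪v, b j⟫| ≤ t j) :
    |⟪u, v⟫| ≤ ∑ j, s j * t j := by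
  rw [← b.sum_inner_mul_inner u v]
  refine (Finset.abs_sum_le_sum_abs _ _).trans (Finset.sum_le_sum fun j _ => ?_)
  rw [abs_mul, real_inner_comm v (b j)]
  exact mul_le_mul (hu j) (hv j) (abs_nonneg _) ((abs_nonneg _).trans (hu j))

lemma OrthonormalBasis.volume_graphSlab_coordBox [FiniteDimensional ℝ F] [MeasurableSpace F]
    [BorelSpace F] (b : OrthonormalBasis ι ℝ F) (a : F) {s : ι → ℝ} (hs : ∀ j, 0 ≤ s j)
    {g : F → ℝ} (hg : Measurable g) (δ : ℝ) :
    volume (graphSlab (coordBox b a s) g δ) =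
      ENNReal.ofReal (2 ^ (Fintype.card ι + 1) * δ * ∏ j, s j) := by
  have hprod : 0 ≤ ∏ j, s j := Finset.prod_nonneg fun j _ => hs j
  rw [volume_graphSlab (measurableSet_coordBox _ a s) hg, b.volume_coordBox a hs,
    ← ENNReal.ofReal_mul (by positivity)]
  ring_nf

end CoordBox

lemma norm_sub_sq_sub_norm_sub_sq {F : Type*} [NormedAddCommGroup F] [InnerProductSpace ℝ F]
    (x x₀ y y₀ : F) :
    ‖y - x₀‖ ^ 2 - ‖y - x‖ ^ 2 = ‖y₀ - x₀‖ ^ 2 - ‖x - y₀‖ ^ 2 + 2 * ⟪y - y₀, x - x₀⟫ := by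
  simp only [← real_inner_self_eq_norm_sq, inner_sub_left, inner_sub_right, real_inner_comm]
  ring

def incidenceParam {n : ℕ} (p : Pt n × Vec n) : Pt n × Pt n :=
  (p.1, (p.2, p.1.2 - ‖p.2 - p.1.1‖ ^ 2))

section Ball

variable {n : ℕ} (zb : Pt n × Pt n) (b : OrthonormalBasis (Fin n) ℝ (Vec n)) (r rs : Fin n → ℝ)
  (ρ : ℝ)

lemma fst_image_ballI_subset : Prod.fst '' ballI n zb b r rs ρ ⊆
    graphSlab (coordBox b zb.1.1 r) (fun x' => zb.2.2 + ‖x' - zb.2.1‖ ^ 2) ρ := by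
  rintro _ ⟨z, ⟨-, hx', hxd, -, -⟩, rfl⟩
  exact ⟨hx', by rwa [← sub_sub]⟩

lemma snd_image_ballI_subset : Prod.snd '' ballI n zb b r rs ρ ⊆
    graphSlab (coordBox b zb.2.1 rs) (fun y' => zb.1.2 - ‖y' - zb.1.1‖ ^ 2) ρ := by
  rintro _ ⟨z, ⟨-, -, -, hy', hyd⟩, rfl⟩
  exact ⟨hy', by rwa [sub_sub_eq_add_sub, add_sub_right_comm]⟩

lemma volume_fst_image_ballI_le (hr : ∀ j, 0 ≤ r j) :
    volume (Prod.fst '' ballI n zb b r rs ρ) ≤ ENNReal.ofReal (2 ^ (n + 1) * ρ * ∏ j, r j) :=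
  (measure_mono (fst_image_ballI_subset zb b r rs ρ)).trans_eq
    (by rw [b.volume_graphSlab_coordBox _ hr (by fun_prop), Fintype.card_fin])

lemma volume_snd_image_ballI_le (hrs : ∀ j, 0 ≤ rs j) :
    volume (Prod.snd '' ballI n zb b r rs ρ) ≤ ENNReal.ofReal (2 ^ (n + 1) * ρ * ∏ j, rs j) :=
  (measure_mono (snd_image_ballI_subset zb b r rs ρ)).trans_eq
    (by rw [b.volume_graphSlab_coordBox _ hrs (by fun_prop), Fintype.card_fin])

lemma graphSlab_prod_coordBox_subset_preimage_ballI
    (hz : zb.2.2 = zb.1.2 - ‖zb.2.1 - zb.1.1‖ ^ 2) (hr : ∀ j, 0 ≤ r j) (hrs : ∀ j, 0 ≤ rs j)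
    (hrrs : ∀ j, r j * rs j = ρ) {ε : ℝ} (hε₁ : ε ≤ 1) (hεn : 4 * n * ε ^ 2 ≤ 1) :
    graphSlab (coordBox b zb.1.1 fun j => ε * r j) (fun x' => zb.2.2 + ‖x' - zb.2.1‖ ^ 2)
        (ρ / 2) ×ˢ coordBox b zb.2.1 (fun j => ε * rs j) ⊆
      incidenceParam ⁻¹' ballI n zb b r rs ρ := by
  rintro ⟨x, y'⟩ ⟨⟨hx', hxd⟩, hy'⟩
  have hρ : 0 < ρ := by linarith [(abs_nonneg _).trans_lt hxd]
  have hinner : |⟪y' - zb.2.1, x.1 - zb.1.1⟫| ≤ ρ / 4 :=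
    calc _ ≤ ∑ j, ε * rs j * (ε * r j) :=
          b.abs_inner_le_sum (fun j => (hy' j).le) (fun j => (hx' j).le)
      _ = n * (ε ^ 2 * ρ) := by
          rw [Finset.sum_congr rfl fun j _ => show ε * rs j * (ε * r j) = ε ^ 2 * ρ by
            rw [← hrrs j]; ring]
          simp
      _ ≤ ρ / 4 := by nlinarith
  have hkey : x.2 - ‖y' - x.1‖ ^ 2 - zb.1.2 + ‖y' - zb.1.1‖ ^ 2 =
      x.2 - (zb.2.2 + ‖x.1 - zb.2.1‖ ^ 2) + 2 * ⟪y' - zb.2.1, x.1 - zb.1.1⟫ := by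
    rw [hz]
    linear_combination norm_sub_sq_sub_norm_sub_sq x.1 zb.1.1 y' zb.2.1
  refine ⟨rfl, fun j => (hx' j).trans_le (mul_le_of_le_one_left (hr j) hε₁), ?_,
    fun j => (hy' j).trans_le (mul_le_of_le_one_left (hrs j) hε₁), ?_⟩
  · show |x.2 - zb.2.2 - ‖x.1 - zb.2.1‖ ^ 2| < ρ
    rw [sub_sub]
    linarith
  · show |x.2 - ‖y' - x.1‖ ^ 2 - zb.1.2 + ‖y' - zb.1.1‖ ^ 2| < ρ
    rw [hkey]
    calc _ ≤ |x.2 - (zb.2.2 + ‖x.1 - zb.2.1‖ ^ 2)| + 2 * |⟪y' - zb.2.1, x.1 - zb.1.1⟫| := by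
          simpa [abs_mul] using abs_add_le (x.2 - (zb.2.2 + ‖x.1 - zb.2.1‖ ^ 2))
            (2 * ⟪y' - zb.2.1, x.1 - zb.1.1⟫)
      _ < ρ := by linarith

lemma le_volume_preimage_incidenceParam_ballI (hz : zb.2.2 = zb.1.2 - ‖zb.2.1 - zb.1.1‖ ^ 2)
    (hρ : 0 ≤ ρ) (hr : ∀ j, 0 ≤ r j) (hrs : ∀ j, 0 ≤ rs j) (hrrs : ∀ j, r j * rs j = ρ) :
    ENNReal.ofReal (1 / (n + 1) ^ (2 * n) * ρ ^ (n + 1)) ≤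
      volume (incidenceParam ⁻¹' ballI n zb b r rs ρ) := by
  set ε : ℝ := 1 / (2 * (n + 1)) with hε
  have hε₀ : 0 ≤ ε := by positivity
  have hε₁ : ε ≤ 1 := by
    rw [hε, div_le_one (by positivity)]
    linarith [(n.cast_nonneg : (0 : ℝ) ≤ n)]
  have hεn : 4 * n * ε ^ 2 ≤ 1 := by
    rw [hε, div_pow, ← mul_div_assoc, div_le_one (by positivity)]
    nlinarith [(n.cast_nonneg : (0 : ℝ) ≤ n)]
  refine Eq.trans_le ?_ (measure_mono
    (graphSlab_prod_coordBox_subset_preimage_ballI zb b r rs ρ hz hr hrs hrrs hε₁ hεn))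
  have h2ε : 2 * ε = 1 / (n + 1) := by rw [hε]; field_simp
  have hprod_nonneg : 0 ≤ ∏ j, ε * r j := Finset.prod_nonneg fun j _ => mul_nonneg hε₀ (hr j)
  have hprod : (∏ j, r j) * ∏ j, rs j = ρ ^ n := by simp [← Finset.prod_mul_distrib, hrrs]
  rw [Measure.volume_eq_prod, Measure.prod_prod, b.volume_graphSlab_coordBox _
      (fun j => mul_nonneg hε₀ (hr j)) (by fun_prop),
    b.volume_coordBox _ fun j => mul_nonneg hε₀ (hrs j),
    ← ENNReal.ofReal_mul (by positivity)]
  congr 1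
  simp only [Finset.prod_mul_distrib, Finset.prod_const, Finset.card_univ, Fintype.card_fin]
  calc _ = (2 * ε) ^ (2 * n) * ρ * ((∏ j, r j) * ∏ j, rs j) := by
        rw [hprod, h2ε, one_div_pow]; ring
    _ = _ := by ring

end Ball

/-- size estimates for balls `ℬ(z̄,e,r,r*)`:
(i) the measure of `ℬ` in the parametrization `(x, y') ↦ (x, (y', x_d - |y'-x'|²))`
of `ℐ` is at least `c ρ^d`; (ii) `|π(ℬ)| ≤ C ρ ∏ r_j`; (iii) `|π*(ℬ)| ≤ C ρ ∏ r*_j`. -/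
theorem stmt1 (d : ℕ) (hd : 2 ≤ d) :
    ∃ c C : ℝ, 0 < c ∧ 0 < C ∧
      ∀ (zb : Pt (d - 1) × Pt (d - 1)) (e : Fin (d - 1) → Vec (d - 1))
        (r rs : Fin (d - 1) → ℝ) (ρ : ℝ), IsBallParams (d - 1) zb e r rs ρ →
        ENNReal.ofReal (c * ρ ^ d) ≤
            volume {p : Pt (d - 1) × Vec (d - 1) |
              (p.1, (p.2, p.1.2 - ‖p.2 - p.1.1‖ ^ 2)) ∈ ballI (d - 1) zb e r rs ρ} ∧
          volume (Prod.fst '' ballI (d - 1) zb e r rs ρ) ≤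
            ENNReal.ofReal (C * ρ * ∏ j, r j) ∧
          volume (Prod.snd '' ballI (d - 1) zb e r rs ρ) ≤
            ENNReal.ofReal (C * ρ * ∏ j, rs j) := by
  -- `n + 1 - 1` reduces to `n` definitionally, so the lemmas about `Pt n` apply as they stand.
  obtain ⟨n, rfl⟩ : ∃ n, d = n + 1 := ⟨d - 1, by omega⟩
  refine ⟨1 / (n + 1) ^ (2 * n), 2 ^ (n + 1), by positivity, by positivity, ?_⟩
  rintro zb e r rs ρ ⟨hz, hρ, he, hr, hrs, hrrs⟩
  obtain ⟨b, rfl⟩ : ∃ b : OrthonormalBasis (Fin n) ℝ (Vec n), ⇑b = e :=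
    ⟨.mk he (he.linearIndependent.span_eq_top_of_card_eq_finrank' (by simp)).ge,
      OrthonormalBasis.coe_mk _ _⟩
  exact ⟨le_volume_preimage_incidenceParam_ballI zb b r rs ρ hz hρ.le (fun j => (hr j).le)
      (fun j => (hrs j).le) hrrs,
    volume_fst_image_ballI_le zb b r rs ρ fun j => (hr j).le,
    volume_snd_image_ballI_le zb b r rs ρ fun j => (hrs j).le⟩
end
end

section
/- There exists a constant c > 0, depending only on d, with the following property. Let B ⊆ ℝ^{d−1} be the open unit ball, and let Φ : ℝ^{d−1} × ℝ^{d−1} → ℝ^{d−1} × ℝ be the map Φ(s, u) = (u, s·u). Let A : ℝ^{d−1} → ℝ^{d−1} be a symmetric invertible linear transformation, and let ω ⊆ A(B) × ℝ^{d−1} be Lebesgue measurable. Then the outer Lebesgue measure of the image satisfies |Φ(ω)| ≥ c |det A|^{−1} ∫_ω |A u| du ds. -/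
/-!
Fix `u`. The fibre of `Φ(ω)` over `u` contains the image of the slice `ω_u = {s | (s, u) ∈ ω}`
under `s ↦ s·u`. Writing `ω_u = A(E)` with `E ⊆ B`, symmetry of `A` turns this image into
`{t·Au | t ∈ E}`. In an orthonormal basis whose first vector is `Au/|Au|`, the set `E` lies in the
box (projection of `E` on that line) × `[-1, 1]^{d-2}`, so `|Au| |E| ≤ 2^{d-2} |{t·Au | t ∈ E}|`.
As `|ω_u| = |det A| |E|`, integrating over `u` (Fubini, applied to a measurable hull of `Φ(ω)`)
gives the claim with `c = 2^{-(d-2)}`.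
-/

open MeasureTheory ENNReal
open scoped RealInnerProductSpace

noncomputable section

open Module Metric
open scoped Pointwise

section Slab

variable {F : Type*} [NormedAddCommGroup F] [InnerProductSpace ℝ F] [FiniteDimensional ℝ F]
  [MeasurableSpace F] [BorelSpace F]

theorem volume_le_volume_image_inner_of_norm_eq_one {v : F} (hv : ‖v‖ = 1) {E : Set F}
    (hE : E ⊆ ball 0 1) :
    volume E ≤ 2 ^ (finrank ℝ F - 1) * volume ((⟪·, v⟫) '' E) := by
  classical
  have hv_orth : Orthonormal ℝ ((↑) : ({v} : Set F) → F) :=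
    ⟨by simpa using hv, fun i j hij => absurd (Subsingleton.elim i j) hij⟩
  obtain ⟨ι, b, hvι, hb⟩ := hv_orth.exists_orthonormalBasis_extension
  let i₀ : ι := ⟨v, hvι rfl⟩
  let e : F ≃ᵐ (ι → ℝ) := b.measurableEquiv.trans (MeasurableEquiv.toLp 2 (ι → ℝ)).symm
  have he : MeasurePreserving e :=
    (EuclideanSpace.volume_preserving_symm_measurableEquiv_toLp ι).comp
      b.measurePreserving_measurableEquiv
  let box := Set.univ.pi (Function.update (fun _ => Set.Icc (-1 : ℝ) 1) i₀ ((⟪·, v⟫) '' E))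
  have hE_box : E ⊆ e ⁻¹' box := by
    intro t ht j _
    have hej : e t j = ⟪b j, t⟫ := b.repr_apply_apply t j
    rcases eq_or_ne j i₀ with rfl | hj
    · rw [Function.update_self, hej, congrFun hb, real_inner_comm]
      exact Set.mem_image_of_mem _ ht
    · rw [Function.update_of_ne hj, Set.mem_Icc, ← abs_le, hej]
      calc |⟪b j, t⟫| ≤ ‖b j‖ * ‖t‖ := abs_real_inner_le_norm _ _
        _ ≤ 1 := by simpa [b.orthonormal.1 j] using (mem_ball_zero_iff.1 (hE ht)).le
  have hcard : ι.card = finrank ℝ F := (finrank_eq_card_finset_basis b.toBasis).symm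
  calc volume E ≤ volume (e ⁻¹' box) := measure_mono hE_box
    _ = volume box := he.measure_preimage_equiv _
    _ = _ := by
      rw [volume_pi_pi, ← Finset.mul_prod_erase _ _ (Finset.mem_univ i₀), Function.update_self,
        Finset.prod_congr rfl fun j hj => by rw [Function.update_of_ne (Finset.ne_of_mem_erase hj)]]
      norm_num [Real.volume_Icc, Finset.card_erase_of_mem, hcard, mul_comm]

theorem ofReal_norm_mul_volume_le_volume_image_inner (v : F) {E : Set F} (hE : E ⊆ ball 0 1) :
    ENNReal.ofReal ‖v‖ * volume E ≤ 2 ^ (finrank ℝ F - 1) * volume ((⟪·, v⟫) '' E) := by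
  rcases eq_or_ne v 0 with rfl | hv
  · simp
  set w := ‖v‖⁻¹ • v
  have hw : ‖w‖ = 1 := norm_smul_inv_norm hv
  have himage : (⟪·, v⟫) '' E = ‖v‖ • (⟪·, w⟫) '' E := by
    rw [← Set.image_smul, Set.image_image]
    congr! 1 with t
    rw [real_inner_smul_right, smul_eq_mul, mul_inv_cancel_left₀ (norm_ne_zero_iff.2 hv)]
  calc ENNReal.ofReal ‖v‖ * volume E
      ≤ ENNReal.ofReal ‖v‖ * (2 ^ (finrank ℝ F - 1) * volume ((⟪·, w⟫) '' E)) := by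
        gcongr; exact volume_le_volume_image_inner_of_norm_eq_one hw hE
    _ = 2 ^ (finrank ℝ F - 1) * volume ((⟪·, v⟫) '' E) := by
        rw [himage, Measure.addHaar_smul, finrank_self, pow_one, abs_norm]; ring

theorem ofReal_norm_apply_mul_volume_le_of_isSymmetric {A : F →ₗ[ℝ] F} (hA : A.IsSymmetric)
    {E : Set F} (hE : E ⊆ A '' ball 0 1) (u : F) :
    ENNReal.ofReal ‖A u‖ * volume E ≤
      2 ^ (finrank ℝ F - 1) * ENNReal.ofReal |LinearMap.det A| * volume ((⟪·, u⟫) '' E) := by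
  set E' := ball 0 1 ∩ A ⁻¹' E
  have hE' : A '' E' = E := by rw [Set.image_inter_preimage, Set.inter_eq_right.2 hE]
  have himage : (⟪·, u⟫) '' E = (⟪·, A u⟫) '' E' := by
    rw [← hE', Set.image_image]
    simp_rw [hA _ u]
  calc ENNReal.ofReal ‖A u‖ * volume E
      = ENNReal.ofReal |LinearMap.det A| * (ENNReal.ofReal ‖A u‖ * volume E') := by
        rw [← hE', Measure.addHaar_image_linearMap (volume : Measure F)]; ring
    _ ≤ ENNReal.ofReal |LinearMap.det A| *
          (2 ^ (finrank ℝ F - 1) * volume ((⟪·, A u⟫) '' E')) := by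
        gcongr _ * ?_
        exact ofReal_norm_mul_volume_le_volume_image_inner (A u) Set.inter_subset_left
    _ = _ := by rw [himage]; ring

theorem ofReal_norm_apply_mul_volume_slice_le_of_isSymmetric {A : F →ₗ[ℝ] F}
    (hA : A.IsSymmetric) {ω : Set (F × F)} (hω : ω ⊆ (A '' ball 0 1) ×ˢ Set.univ) (u : F) :
    ENNReal.ofReal ‖A u‖ * volume ((·, u) ⁻¹' ω) ≤
      2 ^ (finrank ℝ F - 1) * ENNReal.ofReal |LinearMap.det A| *
        volume (Prod.mk u ⁻¹' ((fun p : F × F => (p.2, ⟪p.1, p.2⟫)) '' ω)) := by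
  have himage : (⟪·, u⟫) '' ((·, u) ⁻¹' ω) ⊆
      Prod.mk u ⁻¹' ((fun p : F × F => (p.2, ⟪p.1, p.2⟫)) '' ω) := by
    rintro _ ⟨s, hs, rfl⟩
    exact ⟨(s, u), hs, rfl⟩
  exact (ofReal_norm_apply_mul_volume_le_of_isSymmetric hA (fun s hs => (hω hs).1) u).trans
    (mul_le_mul_right (measure_mono himage) _)

end Slab

section Fubini

variable {α β : Type*} [MeasurableSpace α] [MeasurableSpace β] {μ : Measure α} {ν : Measure β}

theorem lintegral_measure_preimage_prodMk_le [SFinite ν] (s : Set (α × β)) :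
    ∫⁻ x, ν (Prod.mk x ⁻¹' s) ∂μ ≤ μ.prod ν s :=
  calc ∫⁻ x, ν (Prod.mk x ⁻¹' s) ∂μ
      ≤ ∫⁻ x, ν (Prod.mk x ⁻¹' toMeasurable (μ.prod ν) s) ∂μ :=
        lintegral_mono fun _ => measure_mono (Set.preimage_mono (subset_toMeasurable _ _))
    _ = μ.prod ν s := by
        rw [← Measure.prod_apply (measurableSet_toMeasurable _ _), measure_toMeasurable]

theorem setLIntegral_prod_comp_snd [SFinite μ] [SFinite ν] {s : Set (α × β)}
    (hs : MeasurableSet s) {f : β → ℝ≥0∞} (hf : Measurable f) :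
    ∫⁻ p in s, f p.2 ∂μ.prod ν = ∫⁻ y, f y * μ ((·, y) ⁻¹' s) ∂ν := by
  rw [← lintegral_indicator hs, lintegral_prod_symm]
  · refine lintegral_congr fun y => ?_
    rw [← lintegral_indicator_const (measurable_prodMk_right hs)]
    rfl
  · exact ((hf.comp measurable_snd).indicator hs).aemeasurable

end Fubini

theorem stmt12_general (d : ℕ) :
    ∃ c : ℝ, 0 < c ∧
      ∀ (A : Vec (d - 1) →ₗ[ℝ] Vec (d - 1)),
        (∀ x y : Vec (d - 1), ⟪A x, y⟫ = ⟪x, A y⟫) → LinearMap.det A ≠ 0 →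
        ∀ (ω : Set (Vec (d - 1) × Vec (d - 1))), MeasurableSet ω →
          ω ⊆ (A '' Metric.ball 0 1) ×ˢ Set.univ →
          ENNReal.ofReal c * (ENNReal.ofReal |LinearMap.det A|)⁻¹ *
              ∫⁻ p in ω, ENNReal.ofReal ‖A p.2‖ ≤
            volume ((fun p : Vec (d - 1) × Vec (d - 1) => (p.2, ⟪p.1, p.2⟫)) '' ω) := by
  refine ⟨(2 ^ (d - 2))⁻¹, by positivity, fun A hA hdet ω hω hωA => ?_⟩
  set Φ := fun p : Vec (d - 1) × Vec (d - 1) => (p.2, ⟪p.1, p.2⟫)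
  set D := ENNReal.ofReal |LinearMap.det A|
  have hD : D ≠ 0 := by simpa [D] using hdet
  have hc : ENNReal.ofReal (2 ^ (d - 2))⁻¹ * 2 ^ (d - 2) = 1 := by
    rw [ENNReal.ofReal_inv_of_pos (by positivity), ENNReal.ofReal_pow zero_le_two]
    simpa using ENNReal.inv_mul_cancel (by positivity) (by finiteness)
  have hdim : finrank ℝ (Vec (d - 1)) - 1 = d - 2 := by simp; omega
  have hA_meas : Measurable fun u : Vec (d - 1) => ENNReal.ofReal ‖A u‖ :=
    A.continuous_of_finiteDimensional.norm.measurable.ennreal_ofReal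
  calc ENNReal.ofReal (2 ^ (d - 2))⁻¹ * D⁻¹ * ∫⁻ p in ω, ENNReal.ofReal ‖A p.2‖
      = ∫⁻ u, ENNReal.ofReal (2 ^ (d - 2))⁻¹ * D⁻¹ *
          (ENNReal.ofReal ‖A u‖ * volume ((·, u) ⁻¹' ω)) := by
        rw [Measure.volume_eq_prod, setLIntegral_prod_comp_snd hω hA_meas,
          lintegral_const_mul' _ _ (by finiteness)]
    _ ≤ ∫⁻ u, ENNReal.ofReal (2 ^ (d - 2))⁻¹ * D⁻¹ *
          (2 ^ (d - 2) * D * volume (Prod.mk u ⁻¹' (Φ '' ω))) := by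
        refine lintegral_mono fun u => mul_le_mul_right ?_ _
        simpa only [hdim] using ofReal_norm_apply_mul_volume_slice_le_of_isSymmetric hA hωA u
    _ = ∫⁻ u, volume (Prod.mk u ⁻¹' (Φ '' ω)) := lintegral_congr fun u => by
        rw [show ∀ a b c e x : ℝ≥0∞, a * b * (c * e * x) = a * c * (b * e) * x by intros; ring,
          hc, ENNReal.inv_mul_cancel hD ENNReal.ofReal_ne_top, one_mul, one_mul]
    _ ≤ volume (Φ '' ω) := by
        rw [Measure.volume_eq_prod]
        exact lintegral_measure_preimage_prodMk_le _

/-- slicing lemma: for a symmetric invertible linear map `A` of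
`ℝ^{d-1}` and a measurable `ω ⊆ A(B) × ℝ^{d-1}` (with `B` the open unit ball),
the outer measure of the image of `ω` under `Φ(s,u) = (u, s·u)` is at least
`c |det A|⁻¹ ∫_ω |Au| du ds`. -/
theorem stmt12 (d : ℕ) (hd : 2 ≤ d) :
    ∃ c : ℝ, 0 < c ∧
      ∀ (A : Vec (d - 1) →ₗ[ℝ] Vec (d - 1)),
        (∀ x y : Vec (d - 1), ⟪A x, y⟫ = ⟪x, A y⟫) → LinearMap.det A ≠ 0 →
        ∀ (ω : Set (Vec (d - 1) × Vec (d - 1))), MeasurableSet ω →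
          ω ⊆ (A '' Metric.ball 0 1) ×ˢ Set.univ →
          ENNReal.ofReal c * (ENNReal.ofReal |LinearMap.det A|)⁻¹ *
              ∫⁻ p in ω, ENNReal.ofReal ‖A p.2‖ ≤
            volume ((fun p : Vec (d - 1) × Vec (d - 1) => (p.2, ⟪p.1, p.2⟫)) '' ω) :=
  stmt12_general d
end
end

section
/- For any integer n ≥ 1 and any η > 0 there exists c > 0 with the following property: for any Lebesgue measurable set S ⊆ ℝ^n satisfying 0 < |S| < ∞ there exists a bounded convex set 𝒞 ⊆ ℝ^n of positive measure such that for every convex subset 𝒞' ⊆ 𝒞 with |𝒞'| ≤ |𝒞|/2 one has |S ∩ (𝒞 \ 𝒞')| ≥ c (|S|/|𝒞|)^η |S|. -/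
/-!
Start from a compact `T ⊆ S` carrying more than half of `S` and test its convex hull `P`. If `P`
fails, some convex `C' ⊆ P` with `|C'| ≤ |P|/2` misses less than `c (|S|/|P|)^η |S|` of `S`, and we
pass to `T ∩ C'`, whose hull lies in `C'`. The loss is paid for by the potential
`4^(-η) (|S|/|P|)^η |S|`, which grows by the factor `2^η ≥ 1 + δ` when `|P|` halves (here
`c = 4^(-η) δ / 8` with `δ = min (2^η - 1) 1`), so
`4|S| ≤ 8|T| + 4^(-η) (|S|/|P|)^η |S|` is preserved. Together with `|S| ≤ 4|P|` (which forces the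
potential below `|S|`) it keeps `|T| ≥ |S|/4`; as `|P|` at least halves at each step while staying
above `|S|/4`, the process stops at a convex set with the required property.
-/

open MeasureTheory ENNReal Set Bornology

noncomputable section

def IsRobustConvex {E : Type*} [AddCommGroup E] [Module ℝ E] [Bornology E] [MeasurableSpace E]
    (μ : Measure E) (S : Set E) (c η : ℝ) (C : Set E) : Prop :=
  Convex ℝ C ∧ IsBounded C ∧ 0 < μ C ∧
    ∀ C' ⊆ C, Convex ℝ C' → μ C' ≤ μ C / 2 →
      ENNReal.ofReal c * (μ S / μ C) ^ η * μ S ≤ μ (S ∩ (C \ C'))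

def robustConst (η : ℝ) : ℝ := 4 ^ (-η) * min (2 ^ η - 1) 1 / 8

lemma robustConst_pos {η : ℝ} (hη : 0 < η) : 0 < robustConst η := by
  have : 0 < min ((2 : ℝ) ^ η - 1) 1 :=
    lt_min (by linarith [Real.one_lt_rpow (by norm_num : (1 : ℝ) < 2) hη]) one_pos
  unfold robustConst
  positivity

lemma potential_step_of_halving {η s p a p' a' : ℝ} (hη : 0 < η) (hs : 0 < s) (hp : s ≤ 4 * p)
    (ha : 4 * s ≤ 8 * a + 4 ^ (-η) * (s / p) ^ η * s)
    (hloss : a ≤ a' + robustConst η * (s / p) ^ η * s) (hhalf : 2 * p' ≤ p) (ha' : a' ≤ p') :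
    s ≤ 4 * p' ∧ 4 * s ≤ 8 * a' + 4 ^ (-η) * (s / p') ^ η * s := by
  have hp0 : 0 < p := by linarith
  set δ := min ((2 : ℝ) ^ η - 1) 1
  have hδ1 : δ ≤ 1 := min_le_right _ _
  have hδ2 : 1 + δ ≤ 2 ^ η := by linarith [min_le_left ((2 : ℝ) ^ η - 1) 1]
  have hδ0 : 0 ≤ δ :=
    le_min (by linarith [Real.one_lt_rpow (by norm_num : (1 : ℝ) < 2) hη]) zero_le_one
  set B := (4 : ℝ) ^ (-η) * (s / p) ^ η with hB
  have hB0 : 0 ≤ B := by positivity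
  have hB1 : B ≤ 1 := by
    calc B ≤ 4 ^ (-η) * 4 ^ η := by
          refine mul_le_mul_of_nonneg_left (Real.rpow_le_rpow (by positivity) ?_ hη.le)
            (by positivity)
          rw [div_le_iff₀ hp0]; linarith
      _ = 1 := by rw [Real.rpow_neg (by norm_num), inv_mul_cancel₀ (by positivity)]
  have hloss' : a ≤ a' + δ * B * s / 8 := by
    convert hloss using 2; simp only [robustConst, hB]; ring
  have hBs : B * s ≤ s := mul_le_of_le_one_left hs.le hB1
  have hδBs : δ * (B * s) ≤ B * s := mul_le_of_le_one_left (by positivity) hδ1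
  have hsa' : s ≤ 4 * a' := by nlinarith
  have hp'0 : 0 < p' := by linarith
  refine ⟨by linarith, ?_⟩
  have hdouble : 2 * (s / p) ≤ s / p' := by
    rw [← mul_div_assoc, div_le_div_iff₀ hp0 hp'0]; nlinarith
  have hgrow : 2 ^ η * B ≤ 4 ^ (-η) * (s / p') ^ η := by
    calc 2 ^ η * B = 4 ^ (-η) * (2 * (s / p)) ^ η := by
          rw [hB, Real.mul_rpow (by norm_num) (by positivity)]; ring
      _ ≤ 4 ^ (-η) * (s / p') ^ η := by gcongr
  have : (1 + δ) * B * s ≤ 4 ^ (-η) * (s / p') ^ η * s := by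
    apply mul_le_mul_of_nonneg_right _ hs.le
    exact (mul_le_mul_of_nonneg_right hδ2 hB0).trans hgrow
  nlinarith

lemma toReal_ofReal_mul_div_rpow_mul {c : ℝ} (hc : 0 ≤ c) (η : ℝ) (x y : ℝ≥0∞) :
    (ENNReal.ofReal c * (x / y) ^ η * x).toReal = c * (x.toReal / y.toReal) ^ η * x.toReal := by
  simp [ENNReal.toReal_mul, ← ENNReal.toReal_rpow, hc]

lemma ofReal_mul_div_rpow_mul_ne_top (c : ℝ) {η : ℝ} (hη : 0 ≤ η) {x y : ℝ≥0∞} (hx : x ≠ ∞)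
    (hy : y ≠ 0) : ENNReal.ofReal c * (x / y) ^ η * x ≠ ∞ :=
  ENNReal.mul_ne_top (ENNReal.mul_ne_top ENNReal.ofReal_ne_top
    (ENNReal.rpow_ne_top_of_nonneg hη (ENNReal.div_ne_top hx hy))) hx

lemma measureReal_le_inter_add_inter_diff {α : Type*} [MeasurableSpace α] (μ : Measure α)
    {S T P : Set α} (C : Set α) (hTS : T ⊆ S) (hTP : T ⊆ P) (hP : μ P ≠ ∞) :
    μ.real T ≤ μ.real (T ∩ C) + μ.real (S ∩ (P \ C)) := by
  have hsub : T ⊆ (T ∩ C) ∪ (S ∩ (P \ C)) := fun x hx ↦ by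
    by_cases hxC : x ∈ C
    · exact Or.inl ⟨hx, hxC⟩
    · exact Or.inr ⟨hTS hx, hTP hx, hxC⟩
  have hfin : μ ((T ∩ C) ∪ (S ∩ (P \ C))) ≠ ∞ :=
    measure_ne_top_of_subset (union_subset (inter_subset_left.trans hTP)
      (inter_subset_right.trans sdiff_subset)) hP
  exact (measureReal_mono hsub hfin).trans (measureReal_union_le _ _)

section Descent

variable {E : Type*} [NormedAddCommGroup E] [NormedSpace ℝ E] [ProperSpace E] [MeasurableSpace E]
  (μ : Measure E) [IsFiniteMeasureOnCompacts μ] {S : Set E} {η : ℝ}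

lemma measure_convexHull_ne_top {T : Set E} (hT : IsBounded T) : μ (convexHull ℝ T) ≠ ∞ :=
  (isBounded_convexHull.2 hT).measure_lt_top.ne

theorem exists_isRobustConvex_of_potential (hη : 0 < η) (hS : 0 < μ.real S) (k : ℕ) :
    ∀ T : Set E, IsBounded T → T ⊆ S → μ.real S ≤ 4 * μ.real (convexHull ℝ T) →
      4 * μ.real S ≤ 8 * μ.real T +
        4 ^ (-η) * (μ.real S / μ.real (convexHull ℝ T)) ^ η * μ.real S →
      4 * μ.real (convexHull ℝ T) < 2 ^ k * μ.real S →
      ∃ C, IsRobustConvex μ S (robustConst η) η C := by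
  induction k with
  | zero =>
    intro T _ _ hp _ hk
    linarith [pow_zero (2 : ℝ)]
  | succ k ih =>
    intro T hT hTS hp ha hk
    set P := convexHull ℝ T
    have hSfin : μ S ≠ ∞ := (ENNReal.toReal_pos_iff.1 hS).2.ne
    have hPfin : μ P ≠ ∞ := measure_convexHull_ne_top μ hT
    have hPpos : 0 < μ P := (ENNReal.toReal_pos_iff.1 (by linarith : 0 < μ.real P)).1
    have hPconv : Convex ℝ P := convex_convexHull ℝ T
    have hPbdd : IsBounded P := isBounded_convexHull.2 hT
    by_cases hgood : IsRobustConvex μ S (robustConst η) η P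
    · exact ⟨P, hgood⟩
    obtain ⟨C', hC'P, hC', hC'half, hbad⟩ : ∃ C' ⊆ P, Convex ℝ C' ∧ μ C' ≤ μ P / 2 ∧
        μ (S ∩ (P \ C')) < ENNReal.ofReal (robustConst η) * (μ S / μ P) ^ η * μ S := by
      simpa [IsRobustConvex, hPconv, hPbdd, hPpos] using hgood
    have hT'P : convexHull ℝ (T ∩ C') ⊆ C' := convexHull_min inter_subset_right hC'
    have hloss : μ.real T ≤ μ.real (T ∩ C') +
        robustConst η * (μ.real S / μ.real P) ^ η * μ.real S := by
      refine (measureReal_le_inter_add_inter_diff μ C' hTS (subset_convexHull ℝ T) hPfin).trans ?_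
      gcongr
      simp only [measureReal_def]
      rw [← toReal_ofReal_mul_div_rpow_mul (robustConst_pos hη).le]
      exact (ENNReal.toReal_strict_mono (ofReal_mul_div_rpow_mul_ne_top _ hη.le hSfin
        hPpos.ne') hbad).le
    have hhalf : 2 * μ.real (convexHull ℝ (T ∩ C')) ≤ μ.real P := by
      have := ENNReal.toReal_mono (ENNReal.div_ne_top hPfin two_ne_zero)
        ((measure_mono hT'P).trans hC'half)
      rw [ENNReal.toReal_div, ENNReal.toReal_ofNat, ← measureReal_def, ← measureReal_def] at this
      linarith
    have hT' : IsBounded (T ∩ C') := hT.subset inter_subset_left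
    obtain ⟨hp', ha'⟩ := potential_step_of_halving hη hS hp ha hloss hhalf
      (measureReal_mono (subset_convexHull ℝ _) (measure_convexHull_ne_top μ hT'))
    exact ih (T ∩ C') hT' (inter_subset_left.trans hTS) hp' ha'
      (by rw [pow_succ] at hk; linarith)

theorem exists_isRobustConvex [μ.InnerRegularCompactLTTop] (hη : 0 < η) (hS : MeasurableSet S)
    (hS0 : μ S ≠ 0) (hSfin : μ S ≠ ∞) : ∃ C, IsRobustConvex μ S (robustConst η) η C := by
  obtain ⟨K, hKS, hK, hSK⟩ :=
    hS.exists_lt_isCompact_of_ne_top hSfin (ENNReal.half_lt_self hS0 hSfin)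
  have hs : 0 < μ.real S := ENNReal.toReal_pos hS0 hSfin
  have hsK : μ.real S / 2 < μ.real K := by
    have := ENNReal.toReal_strict_mono hK.measure_ne_top hSK
    rwa [ENNReal.toReal_div] at this
  have hKP : μ.real K ≤ μ.real (convexHull ℝ K) :=
    measureReal_mono (subset_convexHull ℝ K) (measure_convexHull_ne_top μ hK.isBounded)
  obtain ⟨k, hk⟩ := pow_unbounded_of_one_lt (4 * μ.real (convexHull ℝ K) / μ.real S) one_lt_two
  refine exists_isRobustConvex_of_potential μ hη hs k K hK.isBounded hKS (by linarith) ?_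
    (by rwa [div_lt_iff₀ hs] at hk)
  have : 0 ≤ (4 : ℝ) ^ (-η) * (μ.real S / μ.real (convexHull ℝ K)) ^ η * μ.real S := by positivity
  linarith

end Descent

theorem stmt13_general (n : ℕ) (η : ℝ) (hη : 0 < η) :
    ∃ c : ℝ, 0 < c ∧
      ∀ (S : Set (Fin n → ℝ)), MeasurableSet S → 0 < volume S → volume S < ⊤ →
        ∃ 𝒞 : Set (Fin n → ℝ),
          Convex ℝ 𝒞 ∧ Bornology.IsBounded 𝒞 ∧ 0 < volume 𝒞 ∧
          ∀ 𝒞' ⊆ 𝒞, Convex ℝ 𝒞' → volume 𝒞' ≤ volume 𝒞 / 2 →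
            ENNReal.ofReal c * (volume S / volume 𝒞) ^ η * volume S ≤
              volume (S ∩ (𝒞 \ 𝒞')) :=
  ⟨robustConst η, robustConst_pos hη, fun _ hS hS0 hStop ↦
    exists_isRobustConvex volume hη hS hS0.ne' hStop.ne⟩

/-- approximation by convex sets: given `n ≥ 1` and `η > 0`,
any set `S` of positive finite measure admits a bounded convex set `𝒞` such
that removing any convex `𝒞' ⊆ 𝒞` of at most half the measure of `𝒞` still
leaves at least `c (|S|/|𝒞|)^η |S|` of `S` inside `𝒞 \ 𝒞'`. -/
theorem stmt13 (n : ℕ) (hn : 1 ≤ n) (η : ℝ) (hη : 0 < η) :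
    ∃ c : ℝ, 0 < c ∧
      ∀ (S : Set (Fin n → ℝ)), MeasurableSet S → 0 < volume S → volume S < ⊤ →
        ∃ 𝒞 : Set (Fin n → ℝ),
          Convex ℝ 𝒞 ∧ Bornology.IsBounded 𝒞 ∧ 0 < volume 𝒞 ∧
          ∀ 𝒞' ⊆ 𝒞, Convex ℝ 𝒞' → volume 𝒞' ≤ volume 𝒞 / 2 →
            ENNReal.ofReal c * (volume S / volume 𝒞) ^ η * volume S ≤
              volume (S ∩ (𝒞 \ 𝒞')) :=
  stmt13_general n η hη
end
end

section
/- For any integer n ≥ 1 and any η > 0 there exists c > 0 with the following property: for any Lebesgue measurable set S ⊆ ℝ^n satisfying 0 < |S| < ∞ there exists a bounded balanced convex set 𝒞 ⊆ ℝ^n of positive measure such that for every balanced convex subset 𝒞' ⊆ 𝒞 with |𝒞'| ≤ |𝒞|/2 one has |S ∩ (𝒞 \ 𝒞')| ≥ c (|S|/|𝒞|)^η |S|. -/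
/-!
Let `m(V)` be the largest mass of `S` that a bounded balanced convex set of volume at most `V`
can capture. If the theorem failed for `S`, then scaling a competitor `K` of volume `≤ V` up to
a set `𝒞 ⊇ K` of volume exactly `V` and removing the offending `𝒞'` would give
`m(V) ≤ m(V/2) + c (|S|/V)^η |S|`. Iterating along `V = 2^k |S|/2` bounds `m` by
`|S|/2 + c |S| ∑ 2^{-ηk}`, which is `< |S|` for small `c`, whereas large balls capture almost
all of `S`.
-/

open MeasureTheory ENNReal Pointwise Module

noncomputable section

theorem ENNReal.le_add_tsum_of_succ_le_add {f d : ℕ → ℝ≥0∞} (h : ∀ k, f (k + 1) ≤ f k + d k)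
    (k : ℕ) : f k ≤ f 0 + ∑' i, d i := by
  have partial_sum : f k ≤ f 0 + ∑ i ∈ Finset.range k, d i := by
    induction k with
    | zero => simp
    | succ k ih =>
      rw [Finset.sum_range_succ, ← add_assoc]
      exact (h k).trans (add_le_add_left ih _)
  exact partial_sum.trans (add_le_add_right (ENNReal.sum_le_tsum _) _)

theorem ENNReal.le_add_tsum_of_le_half_add {f g : ℝ≥0∞ → ℝ≥0∞}
    (h : ∀ V, V ≠ 0 → V ≠ ⊤ → f V ≤ f (V / 2) + g V) {a : ℝ≥0∞} (ha0 : a ≠ 0) (ha : a ≠ ⊤)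
    (k : ℕ) : f (a * 2 ^ k) ≤ f a + ∑' i, g (a * 2 ^ (i + 1)) := by
  have step (i : ℕ) : f (a * 2 ^ (i + 1)) ≤ f (a * 2 ^ i) + g (a * 2 ^ (i + 1)) := by
    simpa [pow_succ, ← mul_assoc, ENNReal.mul_div_cancel_right] using
      h (a * 2 ^ (i + 1)) (by simp [ha0]) (mul_ne_top ha (pow_ne_top ofNat_ne_top))
  simpa using ENNReal.le_add_tsum_of_succ_le_add step k

theorem ENNReal.exists_le_mul_two_pow {a V : ℝ≥0∞} (ha0 : a ≠ 0) (ha : a ≠ ⊤) (hV : V ≠ ⊤) :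
    ∃ k : ℕ, V ≤ a * 2 ^ k := by
  obtain ⟨k, hk⟩ := ENNReal.exists_nat_gt (div_ne_top hV ha0)
  refine ⟨k, mul_comm (2 ^ k) a ▸ (ENNReal.div_le_iff ha0 ha).1 (hk.le.trans ?_)⟩
  exact_mod_cast Nat.lt_two_pow_self.le

theorem ENNReal.tsum_div_doubling_rpow {s : ℝ≥0∞} (hs0 : s ≠ 0) (hs : s ≠ ⊤) (η : ℝ) :
    ∑' i : ℕ, (s / (s / 2 * 2 ^ (i + 1))) ^ η = (1 - 2⁻¹ ^ η)⁻¹ := by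
  have ratio (i : ℕ) : s / (s / 2 * 2 ^ (i + 1)) = 2⁻¹ ^ i := by
    rw [pow_succ', ← mul_assoc, ENNReal.div_mul_cancel two_ne_zero ofNat_ne_top, ← ENNReal.inv_pow]
    simpa using ENNReal.mul_div_mul_left 1 (2 ^ i) hs0 hs
  simp_rw [ratio, ← ENNReal.rpow_natCast, ← ENNReal.rpow_mul, mul_comm _ η, ENNReal.rpow_mul,
    ENNReal.rpow_natCast, ENNReal.tsum_geometric]

section BalancedConvex

variable {E : Type*} [NormedAddCommGroup E] [NormedSpace ℝ E]

def IsBddBalancedConvex (K : Set E) : Prop :=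
  Convex ℝ K ∧ Bornology.IsBounded K ∧ ∀ x ∈ K, -x ∈ K

theorem IsBddBalancedConvex.smul {K : Set E} (hK : IsBddBalancedConvex K) (t : ℝ) :
    IsBddBalancedConvex (t • K) :=
  ⟨hK.1.smul t, hK.2.1.smul₀ t, by rintro _ ⟨y, hy, rfl⟩; exact ⟨-y, hK.2.2 y hy, smul_neg t y⟩⟩

theorem IsBddBalancedConvex.subset_smul {K : Set E} (hK : IsBddBalancedConvex K) {t : ℝ}
    (ht : 1 ≤ t) : K ⊆ t • K :=
  ((balanced_iff_neg_mem hK.1).2 hK.2.2).subset_smul (by rwa [Real.norm_of_nonneg (by linarith)])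

theorem isBddBalancedConvex_closedBall (r : ℝ) :
    IsBddBalancedConvex (Metric.closedBall (0 : E) r) :=
  ⟨convex_closedBall 0 r, Metric.isBounded_closedBall, fun x hx => by simpa using hx⟩

section Measure

variable [MeasurableSpace E] (μ : Measure E)

def maxBalancedMass (S : Set E) (V : ℝ≥0∞) : ℝ≥0∞ :=
  ⨆ (K : Set E) (_ : IsBddBalancedConvex K ∧ μ K ≤ V), μ (S ∩ K)

variable {μ} in
theorem le_maxBalancedMass (S : Set E) {K : Set E} {V : ℝ≥0∞} (hK : IsBddBalancedConvex K)
    (hKV : μ K ≤ V) : μ (S ∩ K) ≤ maxBalancedMass μ S V :=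
  le_iSup₂_of_le K ⟨hK, hKV⟩ le_rfl

theorem maxBalancedMass_le (S : Set E) (V : ℝ≥0∞) : maxBalancedMass μ S V ≤ V :=
  iSup₂_le fun _ hK => (measure_mono Set.inter_subset_right).trans hK.2

theorem maxBalancedMass_mono (S : Set E) : Monotone (maxBalancedMass μ S) :=
  fun _ _ hVW => iSup₂_le fun _ hK => le_maxBalancedMass S hK.1 (hK.2.trans hVW)

theorem exists_lt_maxBalancedMass [ProperSpace E] [IsFiniteMeasureOnCompacts μ] (S : Set E)
    {a : ℝ≥0∞} (ha : a < μ S) :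
    ∃ V, V ≠ ⊤ ∧ a < maxBalancedMass μ S V := by
  have hmono : Monotone fun R : ℕ => S ∩ Metric.closedBall (0 : E) R := fun _ _ hRR' =>
    Set.inter_subset_inter_right _ (Metric.closedBall_subset_closedBall (by exact_mod_cast hRR'))
  have htend := tendsto_measure_iUnion_atTop (μ := μ) hmono
  rw [← Set.inter_iUnion, Metric.iUnion_closedBall_nat, Set.inter_univ] at htend
  obtain ⟨R, hR⟩ := (htend.eventually_const_lt ha).exists
  exact ⟨μ (Metric.closedBall 0 R), measure_closedBall_lt_top.ne,
    hR.trans_le (le_maxBalancedMass S (isBddBalancedConvex_closedBall _) le_rfl)⟩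

theorem half_measure_le_tsum_of_maxBalancedMass_le_half_add [ProperSpace E]
    [IsFiniteMeasureOnCompacts μ] {S : Set E} (hS0 : μ S ≠ 0) (hS : μ S ≠ ⊤)
    {g : ℝ≥0∞ → ℝ≥0∞}
    (h : ∀ V, V ≠ 0 → V ≠ ⊤ → maxBalancedMass μ S V ≤ maxBalancedMass μ S (V / 2) + g V) :
    μ S / 2 ≤ ∑' i, g (μ S / 2 * 2 ^ (i + 1)) := by
  by_contra! hlt
  have hhalf0 : μ S / 2 ≠ 0 := (ENNReal.half_pos hS0).ne'
  have hhalf : μ S / 2 ≠ ⊤ := div_ne_top hS two_ne_zero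
  obtain ⟨V, hV, hVlt⟩ := exists_lt_maxBalancedMass μ S
    ((ENNReal.add_lt_add_left hhalf hlt).trans_eq (ENNReal.add_halves _))
  obtain ⟨k, hk⟩ := ENNReal.exists_le_mul_two_pow hhalf0 hhalf hV
  have hbound := (maxBalancedMass_mono μ S hk).trans
    (ENNReal.le_add_tsum_of_le_half_add h hhalf0 hhalf k)
  exact (hVlt.trans_le (hbound.trans (add_le_add_left (maxBalancedMass_le μ S _) _))).false

variable [BorelSpace E] [FiniteDimensional ℝ E] [μ.IsAddHaarMeasure]

theorem exists_one_le_measure_smul_eq (hE : finrank ℝ E ≠ 0) {K : Set E} {V : ℝ≥0∞}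
    (hK0 : μ K ≠ 0) (hKV : μ K ≤ V) (hV : V ≠ ⊤) : ∃ t : ℝ, 1 ≤ t ∧ μ (t • K) = V := by
  have hK : μ K ≠ ⊤ := ne_top_of_le_ne_top hV hKV
  have hKV' : (μ K).toReal ≤ V.toReal := (ENNReal.toReal_le_toReal hK hV).2 hKV
  have hKpos : 0 < (μ K).toReal := ENNReal.toReal_pos hK0 hK
  refine ⟨(V.toReal / (μ K).toReal) ^ (finrank ℝ E : ℝ)⁻¹,
    Real.one_le_rpow ((one_le_div hKpos).2 hKV') (by positivity), ?_⟩
  rw [Measure.addHaar_smul_of_nonneg _ (by positivity),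
    Real.rpow_inv_natCast_pow (by positivity) hE, ENNReal.ofReal_div_of_pos hKpos,
    ofReal_toReal hV, ofReal_toReal hK, ENNReal.div_mul_cancel hK0 hK]

theorem maxBalancedMass_le_half_add (hE : finrank ℝ E ≠ 0) {S : Set E} {g : ℝ≥0∞ → ℝ≥0∞}
    (H : ∀ C, IsBddBalancedConvex C → 0 < μ C → ∃ C' ⊆ C, Convex ℝ C' ∧ (∀ x ∈ C', -x ∈ C') ∧
      μ C' ≤ μ C / 2 ∧ μ (S ∩ (C \ C')) ≤ g (μ C))
    (V : ℝ≥0∞) (hV0 : V ≠ 0) (hV : V ≠ ⊤) :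
    maxBalancedMass μ S V ≤ maxBalancedMass μ S (V / 2) + g V := by
  refine iSup₂_le fun K ⟨hK, hKV⟩ => ?_
  by_cases hK0 : μ K = 0
  · simp [measure_mono_null Set.inter_subset_right hK0]
  obtain ⟨t, ht, hC⟩ := exists_one_le_measure_smul_eq μ hE hK0 hKV hV
  obtain ⟨C', hC'C, hC'conv, hC'symm, hC'half, hC'g⟩ :=
    H (t • K) (hK.smul t) (hC ▸ pos_iff_ne_zero.2 hV0)
  have hcover : S ∩ K ⊆ (S ∩ C') ∪ (S ∩ (t • K \ C')) := fun x ⟨hxS, hxK⟩ => by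
    by_cases hxC' : x ∈ C'
    · exact Or.inl ⟨hxS, hxC'⟩
    · exact Or.inr ⟨hxS, hK.subset_smul ht hxK, hxC'⟩
  calc μ (S ∩ K) ≤ μ (S ∩ C') + μ (S ∩ (t • K \ C')) :=
        (measure_mono hcover).trans (measure_union_le _ _)
    _ ≤ maxBalancedMass μ S (V / 2) + g V :=
      add_le_add (le_maxBalancedMass S ⟨hC'conv, (hK.smul t).2.1.subset hC'C, hC'symm⟩
        (hC ▸ hC'half)) (hC ▸ hC'g)

theorem exists_pos_const_le_measure_inter_diff (hE : finrank ℝ E ≠ 0) {η : ℝ} (hη : 0 < η) :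
    ∃ c : ℝ, 0 < c ∧ ∀ S : Set E, 0 < μ S → μ S < ⊤ → ∃ 𝒞 : Set E,
      Convex ℝ 𝒞 ∧ Bornology.IsBounded 𝒞 ∧ (∀ x ∈ 𝒞, -x ∈ 𝒞) ∧ 0 < μ 𝒞 ∧
      ∀ 𝒞' ⊆ 𝒞, Convex ℝ 𝒞' → (∀ x ∈ 𝒞', -x ∈ 𝒞') → μ 𝒞' ≤ μ 𝒞 / 2 →
        ENNReal.ofReal c * (μ S / μ 𝒞) ^ η * μ S ≤ μ (S ∩ (𝒞 \ 𝒞')) := by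
  set q : ℝ≥0∞ := 2⁻¹ ^ η
  have hq0 : 1 - q ≠ 0 := (tsub_pos_of_lt (ENNReal.rpow_lt_one (by norm_num) hη)).ne'
  have hq : 1 - q ≠ ⊤ := sub_ne_top one_ne_top
  -- chosen so that the doubling errors sum to `μ S / 4 < μ S / 2`
  set c : ℝ := (1 - q).toReal / 4
  have hc : ENNReal.ofReal c = (1 - q) / 4 := by
    rw [ENNReal.ofReal_div_of_pos four_pos, ofReal_toReal hq, ofReal_ofNat]
  refine ⟨c, by have := ENNReal.toReal_pos hq0 hq; positivity, fun S hS0 hS => ?_⟩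
  by_contra! H
  have hsum : ∑' i : ℕ, ENNReal.ofReal c * (μ S / (μ S / 2 * 2 ^ (i + 1))) ^ η * μ S
      = μ S / 4 := by
    rw [ENNReal.tsum_mul_right, ENNReal.tsum_mul_left,
      ENNReal.tsum_div_doubling_rpow hS0.ne' hS.ne, hc, ENNReal.div_eq_inv_mul, mul_assoc 4⁻¹,
      ENNReal.mul_inv_cancel hq0 hq, mul_one, ENNReal.div_eq_inv_mul]
  have hhalf := half_measure_le_tsum_of_maxBalancedMass_le_half_add μ hS0.ne' hS.ne
    (maxBalancedMass_le_half_add μ hE (g := fun V => ENNReal.ofReal c * (μ S / V) ^ η * μ S)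
      fun C ⟨hCc, hCb, hCs⟩ hC0 =>
        let ⟨C', hC'C, hC'c, hC's, hC'h, hC'lt⟩ := H C hCc hCb hCs hC0
        ⟨C', hC'C, hC'c, hC's, hC'h, hC'lt.le⟩)
  rw [hsum] at hhalf
  exact (ENNReal.div_lt_div_left hS0.ne' hS.ne (by norm_num)).not_ge hhalf

end Measure

end BalancedConvex

/-- approximation by balanced convex sets: given `n ≥ 1` and
`η > 0`, any set `S` of positive finite measure admits a bounded balanced
convex set `𝒞` (balanced: `x ∈ 𝒞 → -x ∈ 𝒞`) such that removing any balanced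
convex `𝒞' ⊆ 𝒞` of at most half the measure of `𝒞` still leaves at least
`c (|S|/|𝒞|)^η |S|` of `S` inside `𝒞 \ 𝒞'`. -/
theorem stmt14 (n : ℕ) (hn : 1 ≤ n) (η : ℝ) (hη : 0 < η) :
    ∃ c : ℝ, 0 < c ∧
      ∀ (S : Set (Fin n → ℝ)), MeasurableSet S → 0 < volume S → volume S < ⊤ →
        ∃ 𝒞 : Set (Fin n → ℝ),
          Convex ℝ 𝒞 ∧ Bornology.IsBounded 𝒞 ∧ (∀ x ∈ 𝒞, -x ∈ 𝒞) ∧ 0 < volume 𝒞 ∧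
          ∀ 𝒞' ⊆ 𝒞, Convex ℝ 𝒞' → (∀ x ∈ 𝒞', -x ∈ 𝒞') → volume 𝒞' ≤ volume 𝒞 / 2 →
            ENNReal.ofReal c * (volume S / volume 𝒞) ^ η * volume S ≤
              volume (S ∩ (𝒞 \ 𝒞')) := by
  obtain ⟨c, hc, h⟩ := exists_pos_const_le_measure_inter_diff (volume : Measure (Fin n → ℝ))
    (by rw [finrank_fin_fun]; omega) hη
  exact ⟨c, hc, fun S _ => h S⟩
end
end

section
/- There exist constants C, A < ∞, depending only on d, such that for any δ ∈ (0, 1] and any ball ℬ = ℬ(z̄, e, r, r*), there exists a finite family {ℬ_j : j ∈ J} of balls of the same type (each of the form ℬ(z_j, e^{(j)}, r^{(j)}, r*^{(j)})) such that ℬ ⊆ ⋃_{j∈J} ℬ_j, the cardinality of J is at most C δ^{−A}, and for every j ∈ J one has |π(ℬ_j)| = δ |π(ℬ)| and |π*(ℬ_j)| = δ |π*(ℬ)|. -/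
open MeasureTheory ENNReal
open scoped RealInnerProductSpace

noncomputable section

/-!
Scaling `r`, `r*` by `l = δ ^ (1 / (d + 1))` and `ρ` by `l²` multiplies both projections of a
ball by `l ^ (d + 1) = δ`, since each projection is a slab of height `2ρ` over a box.

For the covering, let `φ(x, y) = y_d - x_d + |y' - x'|²` be the incidence defect. For
`(c, c*) ∈ ℐ` and any `y` one has `φ(x, c*) = φ(x, y) - φ(c, y) - 2⟨x' - c', c*' - y'⟩`, and if
also `(x, x*) ∈ ℐ` then `φ(x, c*) + φ(c, x*) = 2⟨x' - c', x*' - c*'⟩`. Hence `(x, x*)` lies in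
the small ball centred at the point `(c, c*)` of `ℐ` whose `c'`, `c*'` approximate `x'`, `x*'` to
within `l r_j / 4d`, `l r*_j / 4d` in each coordinate `e_j`, and whose defect `φ(c, x̄*)`
approximates `φ(x, x̄*) - 2⟨x' - c', c*' - x̄*'⟩` to within `l² ρ / 2`. Taking all three
approximations from fixed grids gives `O(l ^ (-2d)) ≤ O(δ ^ (-2d))` centres.
-/

variable {n : ℕ}

def incidenceDefect (x y : Pt n) : ℝ := y.2 - x.2 + ‖y.1 - x.1‖ ^ 2

lemma incidenceDefect_eq_zero_iff {x y : Pt n} :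
    incidenceDefect x y = 0 ↔ y.2 = x.2 - ‖y.1 - x.1‖ ^ 2 := by
  unfold incidenceDefect
  constructor <;> intro h <;> linarith

lemma mem_ballI_iff {c z : Pt n × Pt n} {e : Fin n → Vec n} {r rs : Fin n → ℝ} {ρ : ℝ} :
    z ∈ ballI n c e r rs ρ ↔ incidenceDefect z.1 z.2 = 0 ∧
      (∀ j, |⟪z.1.1 - c.1.1, e j⟫| < r j) ∧ |incidenceDefect z.1 c.2| < ρ ∧
      (∀ j, |⟪z.2.1 - c.2.1, e j⟫| < rs j) ∧ |incidenceDefect c.1 z.2| < ρ := by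
  have h : z.1.2 - c.2.2 - ‖z.1.1 - c.2.1‖ ^ 2 = -incidenceDefect z.1 c.2 := by
    rw [incidenceDefect, norm_sub_rev]; ring
  rw [incidenceDefect_eq_zero_iff, ← abs_neg (incidenceDefect z.1 c.2), ← h]
  rfl

lemma incidenceDefect_eq_sub_sub_inner {x y c cs : Pt n} (hc : incidenceDefect c cs = 0) :
    incidenceDefect x cs =
      incidenceDefect x y - incidenceDefect c y - 2 * ⟪x.1 - c.1, cs.1 - y.1⟫ := by
  rw [incidenceDefect_eq_zero_iff] at hc
  simp only [incidenceDefect, hc, norm_sub_sq_real, inner_sub_left, inner_sub_right]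
  rw [real_inner_comm x.1 cs.1, real_inner_comm x.1 y.1, real_inner_comm c.1 cs.1,
    real_inner_comm c.1 y.1]
  ring

lemma incidenceDefect_add_incidenceDefect {x xs c cs : Pt n} (hx : incidenceDefect x xs = 0)
    (hc : incidenceDefect c cs = 0) :
    incidenceDefect x cs + incidenceDefect c xs = 2 * ⟪x.1 - c.1, xs.1 - cs.1⟫ := by
  rw [incidenceDefect_eq_sub_sub_inner (y := cs) hx, hc, ← neg_sub x.1 c.1, inner_neg_left]
  ring

def incidencePoint (y : Pt n) (u us : Vec n) (t : ℝ) : Pt n × Pt n :=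
  ((u, y.2 + ‖y.1 - u‖ ^ 2 - t), (us, y.2 + ‖y.1 - u‖ ^ 2 - t - ‖us - u‖ ^ 2))

lemma incidenceDefect_incidencePoint (y : Pt n) (u us : Vec n) (t : ℝ) :
    incidenceDefect (incidencePoint y u us t).1 (incidencePoint y u us t).2 = 0 := by
  simp only [incidenceDefect, incidencePoint]; ring

lemma incidenceDefect_incidencePoint_fst (y : Pt n) (u us : Vec n) (t : ℝ) :
    incidenceDefect (incidencePoint y u us t).1 y = t := by
  simp only [incidenceDefect, incidencePoint]; ring

section Orthonormal

variable {E ι : Type*} [NormedAddCommGroup E] [InnerProductSpace ℝ E] [Fintype ι] {e : ι → E}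

lemma Orthonormal.inner_eq_sum_inner_mul_inner [FiniteDimensional ℝ E] (he : Orthonormal ℝ e)
    (hcard : Fintype.card ι = Module.finrank ℝ E) (v w : E) :
    ⟪v, w⟫ = ∑ j, ⟪v, e j⟫ * ⟪w, e j⟫ := by
  have hspan : ⊤ ≤ Submodule.span ℝ (Set.range e) :=
    (he.linearIndependent.span_eq_top_of_card_eq_finrank' hcard).ge
  rw [← (OrthonormalBasis.mk he hspan).sum_inner_mul_inner v w]
  simp only [OrthonormalBasis.coe_mk, real_inner_comm w]

lemma Orthonormal.abs_inner_le_sum_mul [FiniteDimensional ℝ E] (he : Orthonormal ℝ e)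
    (hcard : Fintype.card ι = Module.finrank ℝ E) {v w : E} {a b : ι → ℝ}
    (hv : ∀ j, |⟪v, e j⟫| ≤ a j) (hw : ∀ j, |⟪w, e j⟫| ≤ b j) :
    |⟪v, w⟫| ≤ ∑ j, a j * b j := by
  rw [he.inner_eq_sum_inner_mul_inner hcard]
  refine (Finset.abs_sum_le_sum_abs _ _).trans (Finset.sum_le_sum fun j _ => ?_)
  rw [abs_mul]
  exact mul_le_mul (hv j) (hw j) (abs_nonneg _) ((abs_nonneg _).trans (hv j))

lemma Orthonormal.inner_sub_sum_smul (he : Orthonormal ℝ e) (v : E) (α : ι → ℝ) (j : ι) :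
    ⟪v - ∑ i, α i • e i, e j⟫ = ⟪v, e j⟫ - α j := by
  rw [inner_sub_left, he.inner_left_fintype, conj_trivial]

end Orthonormal

def gridPoints (R h : ℝ) : Finset ℝ :=
  (Finset.Icc (-⌈R / h⌉) ⌈R / h⌉).image fun k : ℤ => k * h

lemma exists_mem_gridPoints_abs_sub_lt {R h t : ℝ} (hh : 0 < h) (ht : |t| ≤ R) :
    ∃ a ∈ gridPoints R h, |t - a| < h := by
  have hk : ⌊t / h⌋ ∈ Finset.Icc (-⌈R / h⌉) ⌈R / h⌉ := by
    have hth : |t / h| ≤ R / h := by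
      rw [abs_div, abs_of_pos hh]; gcongr
    rw [Finset.mem_Icc, ← Int.floor_neg]
    exact ⟨Int.floor_mono (neg_le_of_abs_le hth),
      (Int.floor_mono (le_of_abs_le hth)).trans (Int.floor_le_ceil _)⟩
  refine ⟨⌊t / h⌋ * h, Finset.mem_image_of_mem _ hk, ?_⟩
  have h0 : 0 ≤ t - ⌊t / h⌋ * h := by
    have := Int.floor_le (t / h)
    rw [le_div_iff₀ hh] at this; linarith
  have h1 : t - ⌊t / h⌋ * h < h := by
    have := Int.lt_floor_add_one (t / h)
    rw [div_lt_iff₀ hh] at this; linarith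
  rwa [abs_of_nonneg h0]

lemma card_gridPoints_le {R h : ℝ} (hR : 0 ≤ R) (hh : 0 < h) :
    ((gridPoints R h).card : ℝ) ≤ 2 * R / h + 3 := by
  have hK : (0 : ℤ) ≤ ⌈R / h⌉ := Int.ceil_nonneg (by positivity)
  calc ((gridPoints R h).card : ℝ) ≤ ((Finset.Icc (-⌈R / h⌉) ⌈R / h⌉).card : ℝ) := by
        exact_mod_cast Finset.card_image_le
    _ = 2 * ⌈R / h⌉ + 1 := by
        rw [Int.card_Icc, ← Int.cast_natCast, Int.toNat_of_nonneg (by omega)]; push_cast; ring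
    _ ≤ 2 * R / h + 3 := by
        have := Int.ceil_lt_add_one (R / h); rw [mul_div_assoc]; linarith

def orthoBox (e : Fin n → Vec n) (r : Fin n → ℝ) : Set (Vec n) :=
  {v | ∀ j, |⟪v, e j⟫| < r j}

lemma measurableSet_orthoBox (e : Fin n → Vec n) (r : Fin n → ℝ) :
    MeasurableSet (orthoBox e r) := by
  rw [orthoBox, Set.ofPred_forall]
  exact MeasurableSet.iInter fun j =>
    measurableSet_lt (continuous_id.inner continuous_const).abs.measurable measurable_const

open scoped Pointwise in
lemma orthoBox_smul (e : Fin n → Vec n) (r : Fin n → ℝ) {l : ℝ} (hl : 0 < l) :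
    orthoBox e (l • r) = l • orthoBox e r := by
  ext v
  simp only [Set.mem_smul_set_iff_inv_smul_mem₀ hl.ne', orthoBox, Set.mem_ofPred_eq,
    inner_smul_left, conj_trivial, abs_mul, abs_inv, abs_of_pos hl, inv_mul_lt_iff₀ hl,
    Pi.smul_apply, smul_eq_mul]

lemma volume_orthoBox_smul (e : Fin n → Vec n) (r : Fin n → ℝ) {l : ℝ} (hl : 0 < l) :
    volume (orthoBox e (l • r)) = ENNReal.ofReal (l ^ n) * volume (orthoBox e r) := by
  rw [orthoBox_smul e r hl, Measure.addHaar_smul, finrank_euclideanSpace_fin,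
    abs_of_pos (pow_pos hl n)]

lemma volume_slab {S : Set (Vec n)} (hS : MeasurableSet S) {g : Vec n → ℝ} (hg : Measurable g)
    (ρ : ℝ) :
    volume {p : Pt n | p.1 ∈ S ∧ |p.2 - g p.1| < ρ} = ENNReal.ofReal (2 * ρ) * volume S := by
  have hslab : {p : Pt n | p.1 ∈ S ∧ |p.2 - g p.1| < ρ} =
      regionBetween (fun v => g v - ρ) (fun v => g v + ρ) S := by
    ext p
    simp only [regionBetween, Set.mem_ofPred_eq, Set.mem_Ioo, abs_sub_lt_iff]
    constructor <;> rintro ⟨hp, h1, h2⟩ <;> exact ⟨hp, by linarith, by linarith⟩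
  rw [hslab, Measure.volume_eq_prod,
    volume_regionBetween_eq_lintegral' (hg.sub_const ρ) (hg.add_const ρ) hS]
  simp only [Pi.sub_apply, add_sub_sub_cancel, ← two_mul, setLIntegral_const, mul_comm]

lemma volume_preimage_sub_orthoBox (e : Fin n → Vec n) (r : Fin n → ℝ) (c : Vec n) :
    volume ((· - c) ⁻¹' orthoBox e r) = volume (orthoBox e r) := by
  simp only [sub_eq_add_neg]
  exact measure_preimage_add_right volume (-c) _

variable {zb : Pt n × Pt n} {e : Fin n → Vec n} {r rs : Fin n → ℝ} {ρ : ℝ}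

lemma fst_image_ballI (H : IsBallParams n zb e r rs ρ) :
    Prod.fst '' ballI n zb e r rs ρ =
      {x | x.1 ∈ (· - zb.1.1) ⁻¹' orthoBox e r ∧ |x.2 - (zb.2.2 + ‖zb.2.1 - x.1‖ ^ 2)| < ρ} := by
  have hzb := incidenceDefect_eq_zero_iff.mpr H.1
  ext x
  have hx : |x.2 - (zb.2.2 + ‖zb.2.1 - x.1‖ ^ 2)| = |incidenceDefect x zb.2| := by
    rw [incidenceDefect, ← abs_neg]; ring_nf
  simp only [Set.mem_image, Set.mem_ofPred_eq, Set.mem_preimage, orthoBox, hx]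
  constructor
  · rintro ⟨z, hz, rfl⟩
    obtain ⟨-, h1, h2, -, -⟩ := mem_ballI_iff.mp hz
    exact ⟨h1, h2⟩
  · rintro ⟨h1, h2⟩
    set xs : Pt n := (zb.2.1, x.2 - ‖zb.2.1 - x.1‖ ^ 2)
    have hxxs : incidenceDefect x xs = 0 := incidenceDefect_eq_zero_iff.mpr rfl
    have hsum := incidenceDefect_add_incidenceDefect hxxs hzb
    simp only [xs, sub_self, inner_zero_right, mul_zero] at hsum
    refine ⟨(x, xs), mem_ballI_iff.mpr ⟨hxxs, h1, h2, fun j => ?_, ?_⟩, rfl⟩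
    · simpa [xs] using H.2.2.2.2.1 j
    · rwa [eq_neg_of_add_eq_zero_right hsum, abs_neg]

lemma snd_image_ballI (H : IsBallParams n zb e r rs ρ) :
    Prod.snd '' ballI n zb e r rs ρ =
      {y | y.1 ∈ (· - zb.2.1) ⁻¹' orthoBox e rs ∧ |y.2 - (zb.1.2 - ‖y.1 - zb.1.1‖ ^ 2)| < ρ} := by
  have hzb := incidenceDefect_eq_zero_iff.mpr H.1
  ext y
  have hy : |y.2 - (zb.1.2 - ‖y.1 - zb.1.1‖ ^ 2)| = |incidenceDefect zb.1 y| := by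
    rw [incidenceDefect]; ring_nf
  simp only [Set.mem_image, Set.mem_ofPred_eq, Set.mem_preimage, orthoBox, hy]
  constructor
  · rintro ⟨z, hz, rfl⟩
    obtain ⟨-, -, -, h1, h2⟩ := mem_ballI_iff.mp hz
    exact ⟨h1, h2⟩
  · rintro ⟨h1, h2⟩
    set x : Pt n := (zb.1.1, y.2 + ‖y.1 - zb.1.1‖ ^ 2)
    have hxy : incidenceDefect x y = 0 := by simp only [incidenceDefect, x]; ring
    have hsum := incidenceDefect_add_incidenceDefect hxy hzb
    simp only [x, sub_self, inner_zero_left, mul_zero] at hsum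
    refine ⟨(x, y), mem_ballI_iff.mpr ⟨hxy, fun j => ?_, ?_, h1, h2⟩, rfl⟩
    · simpa [x] using H.2.2.2.1 j
    · rwa [eq_neg_of_add_eq_zero_left hsum, abs_neg]

lemma volume_fst_image_ballI (H : IsBallParams n zb e r rs ρ) :
    volume (Prod.fst '' ballI n zb e r rs ρ) = ENNReal.ofReal (2 * ρ) * volume (orthoBox e r) := by
  rw [fst_image_ballI H,
    volume_slab ((measurableSet_orthoBox e r).preimage (measurable_sub_const _))
      (g := fun v => zb.2.2 + ‖zb.2.1 - v‖ ^ 2) (by fun_prop) ρ,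
    volume_preimage_sub_orthoBox]

lemma volume_snd_image_ballI (H : IsBallParams n zb e r rs ρ) :
    volume (Prod.snd '' ballI n zb e r rs ρ) = ENNReal.ofReal (2 * ρ) * volume (orthoBox e rs) := by
  rw [snd_image_ballI H,
    volume_slab ((measurableSet_orthoBox e rs).preimage (measurable_sub_const _))
      (g := fun v => zb.1.2 - ‖v - zb.1.1‖ ^ 2) (by fun_prop) ρ,
    volume_preimage_sub_orthoBox]

lemma IsBallParams.smul_of_incidenceDefect_eq_zero (H : IsBallParams n zb e r rs ρ)
    {c : Pt n × Pt n} (hc : incidenceDefect c.1 c.2 = 0) {l : ℝ} (hl : 0 < l) :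
    IsBallParams n c e (l • r) (l • rs) (l ^ 2 * ρ) := by
  obtain ⟨-, hρ, he, hr, hrs, hrrs⟩ := H
  refine ⟨incidenceDefect_eq_zero_iff.mp hc, by positivity, he, fun j => mul_pos hl (hr j),
    fun j => mul_pos hl (hrs j), fun j => ?_⟩
  simp only [Pi.smul_apply, smul_eq_mul, ← hrrs j]
  ring

lemma volume_fst_image_ballI_smul (H : IsBallParams n zb e r rs ρ) {c : Pt n × Pt n}
    (hc : incidenceDefect c.1 c.2 = 0) {l : ℝ} (hl : 0 < l) :
    volume (Prod.fst '' ballI n c e (l • r) (l • rs) (l ^ 2 * ρ)) =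
      ENNReal.ofReal (l ^ (n + 2)) * volume (Prod.fst '' ballI n zb e r rs ρ) := by
  have hρ := H.2.1
  rw [volume_fst_image_ballI (H.smul_of_incidenceDefect_eq_zero hc hl), volume_fst_image_ballI H,
    volume_orthoBox_smul e r hl, ← mul_assoc, ← ENNReal.ofReal_mul (by positivity),
    ← mul_assoc (ENNReal.ofReal _), ← ENNReal.ofReal_mul (by positivity)]
  congr 2
  ring

lemma volume_snd_image_ballI_smul (H : IsBallParams n zb e r rs ρ) {c : Pt n × Pt n}
    (hc : incidenceDefect c.1 c.2 = 0) {l : ℝ} (hl : 0 < l) :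
    volume (Prod.snd '' ballI n c e (l • r) (l • rs) (l ^ 2 * ρ)) =
      ENNReal.ofReal (l ^ (n + 2)) * volume (Prod.snd '' ballI n zb e r rs ρ) := by
  have hρ := H.2.1
  rw [volume_snd_image_ballI (H.smul_of_incidenceDefect_eq_zero hc hl), volume_snd_image_ballI H,
    volume_orthoBox_smul e rs hl, ← mul_assoc, ← ENNReal.ofReal_mul (by positivity),
    ← mul_assoc (ENNReal.ofReal _), ← ENNReal.ofReal_mul (by positivity)]
  congr 2
  ring

lemma mem_ballI_incidencePoint (he : Orthonormal ℝ e) {x xs y : Pt n}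
    (hxxs : incidenceDefect x xs = 0) {u us : Vec n} {a b : Fin n → ℝ} {σ : ℝ}
    (hu : ∀ j, |⟪x.1 - u, e j⟫| ≤ a j) (hus : ∀ j, |⟪xs.1 - us, e j⟫| ≤ b j)
    (har : ∀ j, a j < r j) (hbrs : ∀ j, b j < rs j)
    (hσ : |incidenceDefect x y - 2 * ⟪x.1 - u, us - y.1⟫ - σ| + 2 * ∑ j, a j * b j < ρ) :
    (x, xs) ∈ ballI n (incidencePoint y u us σ) e r rs ρ := by
  set c := incidencePoint y u us σ
  have hc : incidenceDefect c.1 c.2 = 0 := incidenceDefect_incidencePoint y u us σ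
  have hxc : incidenceDefect x c.2 = incidenceDefect x y - 2 * ⟪x.1 - u, us - y.1⟫ - σ := by
    rw [incidenceDefect_eq_sub_sub_inner (y := y) hc, incidenceDefect_incidencePoint_fst]
    simp only [c, incidencePoint]
    ring
  have hcross : |⟪x.1 - u, xs.1 - us⟫| ≤ ∑ j, a j * b j :=
    he.abs_inner_le_sum_mul (by simp) hu hus
  have hab : 0 ≤ ∑ j, a j * b j := (abs_nonneg _).trans hcross
  refine mem_ballI_iff.mpr ⟨hxxs, fun j => (hu j).trans_lt (har j), ?_,
    fun j => (hus j).trans_lt (hbrs j), ?_⟩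
  · rw [hxc]; linarith
  · rw [eq_sub_of_add_eq' (incidenceDefect_add_incidenceDefect hxxs hc), hxc]
    calc _ ≤ |2 * ⟪x.1 - u, xs.1 - us⟫| + |incidenceDefect x y - 2 * ⟪x.1 - u, us - y.1⟫ - σ| :=
          abs_sub _ _
      _ < ρ := by rw [abs_mul, abs_two]; linarith

lemma exists_mem_piFinset_gridPoints (he : Orthonormal ℝ e) {ε : ℝ} (hε : 0 < ε)
    (hr : ∀ j, 0 < r j) {v : Vec n} (hv : ∀ j, |⟪v, e j⟫| < r j) :
    ∃ α ∈ Fintype.piFinset fun j => gridPoints (r j) (ε * r j),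
      ∀ j, |⟪v - ∑ i, α i • e i, e j⟫| < ε * r j := by
  choose α hα hαv using fun j => exists_mem_gridPoints_abs_sub_lt (mul_pos hε (hr j)) (hv j).le
  exact ⟨α, Fintype.mem_piFinset.mpr hα, fun j => by rw [he.inner_sub_sum_smul]; exact hαv j⟩

lemma sum_mul_mul_mul_of_mul_eq (hrrs : ∀ j, r j * rs j = ρ) (a b : ℝ) :
    ∑ j, a * r j * (b * rs j) = n * (a * b * ρ) := by
  simp_rw [show ∀ j, a * r j * (b * rs j) = a * b * ρ from fun j => by rw [← hrrs j]; ring]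
  simp

def gridCenters (zb : Pt n × Pt n) (e : Fin n → Vec n) (r rs : Fin n → ℝ) (ρ l : ℝ) :
    Finset (Pt n × Pt n) :=
  ((Fintype.piFinset fun j => gridPoints (r j) (l / (4 * (n + 1)) * r j)) ×ˢ
      (Fintype.piFinset fun j => gridPoints (rs j) (l / (4 * (n + 1)) * rs j)) ×ˢ
      gridPoints (2 * ρ) (l ^ 2 * ρ / 2)).image fun p =>
    incidencePoint zb.2 (zb.1.1 + ∑ j, p.1 j • e j) (zb.2.1 + ∑ j, p.2.1 j • e j) p.2.2

lemma incidenceDefect_of_mem_gridCenters {l : ℝ} {c : Pt n × Pt n}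
    (hc : c ∈ gridCenters zb e r rs ρ l) : incidenceDefect c.1 c.2 = 0 := by
  obtain ⟨p, -, rfl⟩ := Finset.mem_image.mp hc
  exact incidenceDefect_incidencePoint _ _ _ _

lemma ballI_subset_biUnion_gridCenters (H : IsBallParams n zb e r rs ρ) {l : ℝ} (hl0 : 0 < l)
    (hl1 : l ≤ 1) :
    ballI n zb e r rs ρ ⊆
      ⋃ c ∈ gridCenters zb e r rs ρ l, ballI n c e (l • r) (l • rs) (l ^ 2 * ρ) := by
  obtain ⟨-, hρ, he, hr, hrs, hrrs⟩ := H
  set ε := l / (4 * (n + 1)) with hε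
  have hε0 : 0 < ε := by positivity
  have hεl : 4 * (n + 1) * ε = l := by rw [hε]; field_simp
  have hε1 : ε ≤ 1 := by nlinarith
  have hεlt : ε < l := by nlinarith
  rintro ⟨x, xs⟩ hz
  obtain ⟨hxxs, hx, hxzb, hxs, -⟩ := mem_ballI_iff.mp hz
  dsimp only at hxxs hx hxzb hxs
  obtain ⟨α, hα, hxα⟩ := exists_mem_piFinset_gridPoints he hε0 hr hx
  obtain ⟨β, hβ, hxsβ⟩ := exists_mem_piFinset_gridPoints he hε0 hrs hxs
  simp only [← sub_add_eq_sub_sub] at hxα hxsβ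
  set u := zb.1.1 + ∑ j, α j • e j
  set us := zb.2.1 + ∑ j, β j • e j
  have hus : ∀ j, |⟪us - zb.2.1, e j⟫| ≤ 2 * rs j := fun j => by
    rw [show us - zb.2.1 = (xs.1 - zb.2.1) - (xs.1 - us) by abel, inner_sub_left]
    have : ε * rs j ≤ rs j := mul_le_of_le_one_left (hrs j).le hε1
    linarith [abs_sub (⟪xs.1 - zb.2.1, e j⟫) ⟪xs.1 - us, e j⟫, hxs j, hxsβ j]
  have hT : |incidenceDefect x zb.2 - 2 * ⟪x.1 - u, us - zb.2.1⟫| ≤ 2 * ρ := by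
    have hin := he.abs_inner_le_sum_mul (by simp) (fun j => (hxα j).le) hus
    rw [sum_mul_mul_mul_of_mul_eq hrrs] at hin
    have : (n : ℝ) * (ε * 2 * ρ) ≤ ρ / 2 := by nlinarith
    have h2 : |2 * ⟪x.1 - u, us - zb.2.1⟫| = 2 * |⟪x.1 - u, us - zb.2.1⟫| := by
      rw [abs_mul, abs_two]
    linarith [abs_sub (incidenceDefect x zb.2) (2 * ⟪x.1 - u, us - zb.2.1⟫)]
  obtain ⟨σ, hσ, hTσ⟩ := exists_mem_gridPoints_abs_sub_lt (h := l ^ 2 * ρ / 2) (by positivity) hT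
  refine Set.mem_biUnion (Finset.mem_image_of_mem _
    (Finset.mk_mem_product hα (Finset.mk_mem_product hβ hσ))) ?_
  refine mem_ballI_incidencePoint he hxxs (fun j => (hxα j).le) (fun j => (hxsβ j).le)
    (fun j => ?_) (fun j => ?_) ?_
  · exact mul_lt_mul_of_pos_right hεlt (hr j)
  · exact mul_lt_mul_of_pos_right hεlt (hrs j)
  · rw [sum_mul_mul_mul_of_mul_eq hrrs]
    have : (n : ℝ) * (ε * ε * ρ) * 2 ≤ l ^ 2 * ρ / 2 := by
      have hn : (n : ℝ) * 2 ≤ 8 * (n + 1) ^ 2 := by nlinarith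
      rw [← hεl]
      nlinarith [mul_le_mul_of_nonneg_right hn (by positivity : 0 ≤ ε ^ 2 * ρ)]
    linarith

lemma card_piFinset_gridPoints_le {R : Fin n → ℝ} (hR : ∀ j, 0 < R j) {ε : ℝ} (hε : 0 < ε) :
    ((Fintype.piFinset fun j => gridPoints (R j) (ε * R j)).card : ℝ) ≤ (2 / ε + 3) ^ n := by
  rw [Fintype.card_piFinset, Nat.cast_prod]
  calc _ ≤ ∏ _j : Fin n, (2 / ε + 3) := Finset.prod_le_prod (fun _ _ => by positivity) fun j _ =>
          (card_gridPoints_le (hR j).le (mul_pos hε (hR j))).trans_eq (by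
            field_simp [(hR j).ne'])
    _ = _ := by rw [Finset.prod_const, Finset.card_univ, Fintype.card_fin]

lemma card_gridCenters_le (H : IsBallParams n zb e r rs ρ) {l : ℝ} (hl0 : 0 < l) (hl1 : l ≤ 1) :
    ((gridCenters zb e r rs ρ l).card : ℝ) ≤
      (11 * (n + 1)) ^ (2 * n + 1) * l⁻¹ ^ (2 * n + 2) := by
  obtain ⟨-, hρ, -, hr, hrs, -⟩ := H
  have hl : 1 ≤ l⁻¹ := one_le_inv₀ hl0 |>.mpr hl1
  have hcoord : 2 / (l / (4 * (n + 1))) + 3 ≤ 11 * (n + 1) * l⁻¹ := by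
    rw [div_div_eq_mul_div, div_eq_mul_inv]
    nlinarith
  have hdefect : 2 * (2 * ρ) / (l ^ 2 * ρ / 2) + 3 ≤ 11 * (n + 1) * l⁻¹ ^ 2 := by
    rw [show 2 * (2 * ρ) / (l ^ 2 * ρ / 2) = 8 * l⁻¹ ^ 2 by field_simp; ring]
    nlinarith
  have hε : 0 < l / (4 * (n + 1)) := by positivity
  have hcard : (gridCenters zb e r rs ρ l).card ≤ _ := Finset.card_image_le
  rw [Finset.card_product, Finset.card_product] at hcard
  calc ((gridCenters zb e r rs ρ l).card : ℝ)
      ≤ (Fintype.piFinset fun j => gridPoints (r j) (l / (4 * (n + 1)) * r j)).card *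
          ((Fintype.piFinset fun j => gridPoints (rs j) (l / (4 * (n + 1)) * rs j)).card *
            (gridPoints (2 * ρ) (l ^ 2 * ρ / 2)).card) := by
        exact_mod_cast hcard
    _ ≤ (11 * (n + 1) * l⁻¹) ^ n * ((11 * (n + 1) * l⁻¹) ^ n * (11 * (n + 1) * l⁻¹ ^ 2)) := by
        gcongr
        · exact (card_piFinset_gridPoints_le hr hε).trans (by gcongr)
        · exact (card_piFinset_gridPoints_le hrs hε).trans (by gcongr)
        · exact (card_gridPoints_le (by positivity) (by positivity)).trans hdefect
    _ = (11 * (n + 1)) ^ (2 * n + 1) * l⁻¹ ^ (2 * n + 2) := by simp only [mul_pow]; ring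

theorem stmt17_general (d : ℕ) :
    ∃ C A : ℝ, 0 < C ∧ 0 < A ∧
      ∀ (δ : ℝ), 0 < δ → δ ≤ 1 →
      ∀ (zb : Pt (d - 1) × Pt (d - 1)) (e : Fin (d - 1) → Vec (d - 1))
        (r rs : Fin (d - 1) → ℝ) (ρ : ℝ), IsBallParams (d - 1) zb e r rs ρ →
        ∃ (m : ℕ) (zbs : Fin m → Pt (d - 1) × Pt (d - 1))
          (es : Fin m → Fin (d - 1) → Vec (d - 1))
          (rj rsj : Fin m → Fin (d - 1) → ℝ) (ρs : Fin m → ℝ),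
          (m : ℝ) ≤ C * δ ^ (-A) ∧
          (∀ j, IsBallParams (d - 1) (zbs j) (es j) (rj j) (rsj j) (ρs j)) ∧
          ballI (d - 1) zb e r rs ρ ⊆
            ⋃ j, ballI (d - 1) (zbs j) (es j) (rj j) (rsj j) (ρs j) ∧
          (∀ j, volume (Prod.fst '' ballI (d - 1) (zbs j) (es j) (rj j) (rsj j) (ρs j)) =
            ENNReal.ofReal δ * volume (Prod.fst '' ballI (d - 1) zb e r rs ρ)) ∧
          (∀ j, volume (Prod.snd '' ballI (d - 1) (zbs j) (es j) (rj j) (rsj j) (ρs j)) =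
            ENNReal.ofReal δ * volume (Prod.snd '' ballI (d - 1) zb e r rs ρ)) := by
  refine ⟨(11 * ((d - 1 : ℕ) + 1)) ^ (2 * (d - 1) + 1), ((2 * (d - 1) + 2 : ℕ) : ℝ),
    by positivity, by positivity, ?_⟩
  intro δ hδ0 hδ1 zb e r rs ρ H
  set l := δ ^ ((d - 1 + 2 : ℕ) : ℝ)⁻¹
  have hl0 : 0 < l := Real.rpow_pos_of_pos hδ0 _
  have hl1 : l ≤ 1 := Real.rpow_le_one hδ0.le hδ1 (by positivity)
  have hlδ : l ^ (d - 1 + 2) = δ := Real.rpow_inv_natCast_pow hδ0.le (by omega)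
  set S := gridCenters zb e r rs ρ l
  have hS : ∀ j, incidenceDefect (S.equivFin.symm j).1.1 (S.equivFin.symm j).1.2 = 0 :=
    fun j => incidenceDefect_of_mem_gridCenters (S.equivFin.symm j).2
  refine ⟨S.card, fun j => (S.equivFin.symm j).1, fun _ => e, fun _ => l • r, fun _ => l • rs,
    fun _ => l ^ 2 * ρ, ?_, fun j => H.smul_of_incidenceDefect_eq_zero (hS j) hl0, ?_,
    fun j => by rw [volume_fst_image_ballI_smul H (hS j) hl0, hlδ],
    fun j => by rw [volume_snd_image_ballI_smul H (hS j) hl0, hlδ]⟩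
  · calc (S.card : ℝ) ≤ (11 * ((d - 1 : ℕ) + 1)) ^ (2 * (d - 1) + 1) * l⁻¹ ^ (2 * (d - 1) + 2) :=
          card_gridCenters_le H hl0 hl1
      _ ≤ (11 * ((d - 1 : ℕ) + 1)) ^ (2 * (d - 1) + 1) * δ⁻¹ ^ (2 * (d - 1) + 2) := by
          gcongr
          exact hlδ ▸ pow_le_of_le_one hl0.le hl1 (by omega)
      _ = _ := by rw [Real.rpow_neg hδ0.le, Real.rpow_natCast, inv_pow]
  · intro z hz
    obtain ⟨c, hc, hzc⟩ := Set.mem_iUnion₂.mp (ballI_subset_biUnion_gridCenters H hl0 hl1 hz)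
    exact Set.mem_iUnion.mpr ⟨S.equivFin ⟨c, hc⟩, by simpa using hzc⟩

/-- covering lemma: any ball `ℬ` can be covered by at most
`C δ^{-A}` balls `ℬ_j` whose projections satisfy `|π(ℬ_j)| = δ |π(ℬ)|` and
`|π*(ℬ_j)| = δ |π*(ℬ)|`. -/
theorem stmt17 (d : ℕ) (hd : 2 ≤ d) :
    ∃ C A : ℝ, 0 < C ∧ 0 < A ∧
      ∀ (δ : ℝ), 0 < δ → δ ≤ 1 →
      ∀ (zb : Pt (d - 1) × Pt (d - 1)) (e : Fin (d - 1) → Vec (d - 1))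
        (r rs : Fin (d - 1) → ℝ) (ρ : ℝ), IsBallParams (d - 1) zb e r rs ρ →
        ∃ (m : ℕ) (zbs : Fin m → Pt (d - 1) × Pt (d - 1))
          (es : Fin m → Fin (d - 1) → Vec (d - 1))
          (rj rsj : Fin m → Fin (d - 1) → ℝ) (ρs : Fin m → ℝ),
          (m : ℝ) ≤ C * δ ^ (-A) ∧
          (∀ j, IsBallParams (d - 1) (zbs j) (es j) (rj j) (rsj j) (ρs j)) ∧
          ballI (d - 1) zb e r rs ρ ⊆
            ⋃ j, ballI (d - 1) (zbs j) (es j) (rj j) (rsj j) (ρs j) ∧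
          (∀ j, volume (Prod.fst '' ballI (d - 1) (zbs j) (es j) (rj j) (rsj j) (ρs j)) =
            ENNReal.ofReal δ * volume (Prod.fst '' ballI (d - 1) zb e r rs ρ)) ∧
          (∀ j, volume (Prod.snd '' ballI (d - 1) (zbs j) (es j) (rj j) (rsj j) (ρs j)) =
            ENNReal.ofReal δ * volume (Prod.snd '' ballI (d - 1) zb e r rs ρ)) :=
  stmt17_general d
end
end
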